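/- arXiv:1910.05939 — 9 statements merged into one kernel-verified Lean document; each statement's English description precedes it below -/
import Mathlib

section
/- There exists a constant c > 0 with the following property: for every M ∈ ℕ there exists an integer m ≥ M such that m is a sum of two squares and no integer n with m < n < m + c·log m is a sum of two squares. In other words, the increasing enumeration (ω_n) of the set {k₁² + k₂² : k₁, k₂ ∈ ℤ} contains infinitely many n with ω_{n+1} − ω_n ≥ c·log ω_n. -/
/-!
If `4 h² ∣ N`, then `N - h = h u` with `u ≡ -1 (mod 4h)`; such a `u` is coprime to `h` and
`≡ 3 (mod 4)`, so `N - h` is not a sum of two squares. Hence `N = 4 lcm(1, …, L)² (M + 1)²`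
kills `N - 1, …, N - L` at once, and the largest sum of two squares below `N` is followed by a
gap longer than `L`. Chebyshev's bound `ψ(L) = O(L)` gives `log N = O(L + log M)`, so the choice
`L ≈ log M` makes this gap a constant multiple of the logarithm.
-/

open Chebyshev

theorem Nat.not_exists_sq_add_sq_of_mod_four_eq_three {n : ℕ} (hn : n % 4 = 3) :
    ¬ ∃ x y : ℕ, n = x ^ 2 + y ^ 2 := by
  rintro ⟨x, y, rfl⟩
  have key : ∀ a b : ZMod 4, a ^ 2 + b ^ 2 ≠ 3 := by decide
  exact key x y (by simpa using (ZMod.natCast_eq_natCast_iff' (x ^ 2 + y ^ 2) 3 4).mpr hn)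

theorem Nat.exists_sq_add_sq_of_mul_of_coprime {a b : ℕ} (hab : a.Coprime b)
    (h : ∃ x y : ℕ, a * b = x ^ 2 + y ^ 2) : ∃ x y : ℕ, b = x ^ 2 + y ^ 2 := by
  rcases eq_or_ne a 0 with rfl | ha
  · exact ⟨1, 0, by simpa using hab⟩
  refine Nat.eq_sq_add_sq_iff.mpr fun q hq hq4 => ?_
  obtain ⟨hqp, hqb, hb⟩ := Nat.mem_primeFactors.mp hq
  have : Fact q.Prime := ⟨hqp⟩
  have hqa : ¬ q ∣ a := fun hqa => hqp.not_dvd_one (hab ▸ Nat.dvd_gcd hqa hqb)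
  have hval := Nat.eq_sq_add_sq_iff.mp h q
    (hqp.mem_primeFactors (dvd_mul_of_dvd_right hqb a) (mul_ne_zero ha hb)) hq4
  rwa [padicValNat.mul ha hb, padicValNat.eq_zero_of_not_dvd hqa, zero_add] at hval

theorem Nat.not_exists_sq_add_sq_sub_of_four_mul_sq_dvd {N h : ℕ} (hh : 0 < h) (hN : N ≠ 0)
    (hdvd : 4 * h ^ 2 ∣ N) : ¬ ∃ x y : ℕ, N - h = x ^ 2 + y ^ 2 := by
  obtain ⟨r, rfl⟩ := hdvd
  have hr : 0 < r := Nat.pos_of_ne_zero (right_ne_zero_of_mul hN)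
  obtain ⟨u, hu⟩ : ∃ u, u + 1 = 4 * (h * r) :=
    ⟨4 * (h * r) - 1, by have := Nat.mul_pos hh hr; omega⟩
  have hsplit : 4 * h ^ 2 * r - h = h * u := by
    rw [Nat.sub_eq_iff_eq_add (by nlinarith), ← mul_add_one, hu]
    ring
  have hcop : h.Coprime u := Nat.eq_one_of_dvd_one <|
    (Nat.dvd_add_right (Nat.gcd_dvd_right h u)).mp
      (hu ▸ dvd_mul_of_dvd_right (dvd_mul_of_dvd_left (Nat.gcd_dvd_left h u) r) 4)
  rw [hsplit]
  exact fun hsq => Nat.not_exists_sq_add_sq_of_mod_four_eq_three (by omega)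
    (Nat.exists_sq_add_sq_of_mul_of_coprime hcop hsq)

theorem Int.exists_sq_add_sq_natCast_iff (n : ℕ) :
    (∃ k₁ k₂ : ℤ, (n : ℤ) = k₁ ^ 2 + k₂ ^ 2) ↔ ∃ x y : ℕ, n = x ^ 2 + y ^ 2 := by
  constructor
  · rintro ⟨k₁, k₂, h⟩
    exact ⟨k₁.natAbs, k₂.natAbs, by zify; simpa using h⟩
  · rintro ⟨x, y, h⟩
    exact ⟨x, y, by exact_mod_cast h⟩

theorem Nat.exists_greatest_below_gap {S : ℕ → Prop} [DecidablePred S] {a N L : ℕ} (ha : S a)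
    (haN : a < N) (hgap : ∀ h, 0 < h → h ≤ L → ¬ S (N - h)) :
    ∃ m, a ≤ m ∧ m + L < N ∧ S m ∧ ∀ n, m < n → n < N → ¬ S n := by
  have haN' : a ≤ N - 1 := by omega
  set m := Nat.findGreatest S (N - 1)
  have hm : S m := Nat.findGreatest_spec haN' ha
  have hmN : m < N := by have := Nat.findGreatest_le (P := S) (N - 1); omega
  refine ⟨m, Nat.le_findGreatest haN' ha, ?_, hm,
    fun n hmn hnN => Nat.findGreatest_is_greatest hmn (by omega)⟩
  by_contra! hLm
  exact hgap (N - m) (by omega) (by omega) (by rwa [Nat.sub_sub_self hmN.le])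

theorem log_four_mul_lcmUpto_sq_mul_sq_le (L : ℕ) {B : ℕ} (hB : B ≠ 0) :
    Real.log (4 * Nat.lcmUpto L ^ 2 * B ^ 2 : ℕ) ≤ 3 + 14 * L + 2 * Real.log B := by
  have hlog4 : Real.log 4 ≤ 3 := by
    linarith [Real.log_le_sub_one_of_pos (by norm_num : (0 : ℝ) < 4)]
  have hψ : Real.log (Nat.lcmUpto L) ≤ 7 * L := by
    rw [← psi_eq_log_lcmUpto]
    calc ψ L ≤ (Real.log 4 + 4) * L := psi_le_const_mul_self L.cast_nonneg
      _ ≤ 7 * L := by gcongr; linarith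
  have hD : (Nat.lcmUpto L : ℝ) ≠ 0 := by exact_mod_cast Nat.lcmUpto_ne_zero L
  have hB' : (B : ℝ) ≠ 0 := by exact_mod_cast hB
  push_cast
  rw [Real.log_mul (by positivity) (by positivity), Real.log_mul (by norm_num) (by positivity),
    Real.log_pow, Real.log_pow]
  push_cast
  linarith

/-- Richards's number-theoretic lemma: the sequence of sums of two squares
contains infinitely many gaps of logarithmic size. -/
theorem richards_log_gaps :
    ∃ c : ℝ, 0 < c ∧ ∀ M : ℕ, ∃ m : ℕ, M ≤ m ∧
      (∃ k₁ k₂ : ℤ, (m : ℤ) = k₁ ^ 2 + k₂ ^ 2) ∧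
      ∀ n : ℕ, m < n → (n : ℝ) < (m : ℝ) + c * Real.log (m : ℝ) →
        ¬ ∃ k₁ k₂ : ℤ, (n : ℤ) = k₁ ^ 2 + k₂ ^ 2 := by
  classical
  refine ⟨1 / 16, by norm_num, fun M => ?_⟩
  simp only [Int.exists_sq_add_sq_natCast_iff]
  set L := ⌈Real.log (M + 1)⌉₊
  set N := 4 * Nat.lcmUpto L ^ 2 * (M + 1) ^ 2
  have hN : N ≠ 0 := by positivity [Nat.lcmUpto_ne_zero L]
  have hgap : ∀ h, 0 < h → h ≤ L → ¬ ∃ x y : ℕ, N - h = x ^ 2 + y ^ 2 := fun h hh hhL =>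
    Nat.not_exists_sq_add_sq_sub_of_four_mul_sq_dvd hh hN <| Dvd.dvd.mul_right (mul_dvd_mul_left 4
      (pow_dvd_pow_of_dvd (Finset.dvd_lcm (Finset.mem_Icc.mpr ⟨hh, hhL⟩)) 2)) _
  have hsq_lt : (M + 1) ^ 2 < N := by
    have hD : 1 ≤ Nat.lcmUpto L ^ 2 := Nat.one_le_pow _ _ (Nat.lcmUpto_pos L)
    have hB : 0 < (M + 1) ^ 2 := by positivity
    show (M + 1) ^ 2 < 4 * Nat.lcmUpto L ^ 2 * (M + 1) ^ 2
    nlinarith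
  obtain ⟨m, hMm, hmN, hm, hfree⟩ :=
    Nat.exists_greatest_below_gap (S := fun n => ∃ x y : ℕ, n = x ^ 2 + y ^ 2)
      ⟨M + 1, 0, by ring⟩ hsq_lt hgap
  have hlogm : Real.log m ≤ 16 * (L + 1) := calc
    Real.log m ≤ Real.log N := Real.log_le_log (by norm_cast; exact hMm.trans_lt' (by positivity))
        (by exact_mod_cast (Nat.le_add_right m L).trans hmN.le)
    _ ≤ 3 + 14 * L + 2 * Real.log (M + 1 : ℕ) := log_four_mul_lcmUpto_sq_mul_sq_le L M.succ_ne_zero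
    _ ≤ 16 * (L + 1) := by push_cast; linarith [Nat.le_ceil (Real.log (M + 1))]
  refine ⟨m, by nlinarith, hm, fun n hmn hn => hfree n hmn ?_⟩
  have hmN' : (m : ℝ) + L + 1 ≤ N := by exact_mod_cast hmN
  exact_mod_cast (show (n : ℝ) < N by linarith)
end

section
/- For every K > 0 there exists a positive integer m which is a nonzero sum of two squares such that every nonzero sum of two squares n with n > m satisfies n − m > K. Equivalently, if λ₁ ≤ λ₂ ≤ λ₃ ≤ … is the increasing enumeration of the set {j₁² + j₂² : (j₁,j₂) ∈ ℤ² \ {0}} (the eigenvalues of the Stokes operator on the two-dimensional torus), then limsup_{N→∞} (λ_{N+1} − λ_N) = ∞. -/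
/-!
Choose distinct primes `q₀, q₁, …, q_{k-1}` congruent to `3` mod `4` (Dirichlet). By the Chinese
remainder theorem there is an `x` with `x + i + 1 ≡ qᵢ [MOD qᵢ²]` for every `i < k`, so `qᵢ` divides
`x + i + 1` exactly once; an odd power of a prime `≡ 3 [MOD 4]` rules out a sum of two squares, so
none of `x + 1, …, x + k` is one. The largest sum of two squares `m ≤ x` is then followed by a gap
longer than `k`.
-/

open Function

namespace Nat

theorem not_exists_sq_add_sq_of_modEq_sq {p n : ℕ} (hp : p.Prime) (hp4 : p ≡ 3 [MOD 4])
    (hn : n ≡ p [MOD p ^ 2]) : ¬ ∃ a b, n = a ^ 2 + b ^ 2 := by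
  have : Fact p.Prime := ⟨hp⟩
  have hp_dvd : p ∣ n := (hn.dvd_iff (dvd_pow_self p two_ne_zero)).2 dvd_rfl
  have hp_sq_not_dvd : ¬ p ^ 2 ∣ n := fun h =>
    (pow_dvd_pow_iff_le_right hp.one_lt).1 (by simpa using (hn.dvd_iff dvd_rfl).1 h)
      |>.not_gt one_lt_two
  have hn0 : n ≠ 0 := by rintro rfl; exact hp_sq_not_dvd (dvd_zero _)
  have hval : padicValNat p n = 1 := by
    have h1 := (padicValNat_dvd_iff_le (p := p) (n := 1) hn0).1 (by rwa [pow_one])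
    have h2 := mt (padicValNat_dvd_iff_le (p := p) (n := 2) hn0).2 hp_sq_not_dvd
    omega
  intro hsum
  have := eq_sq_add_sq_iff.1 hsum p (mem_primeFactors.2 ⟨hp, hp_dvd, hn0⟩) hp4
  rw [hval] at this
  exact not_even_one this

theorem exists_forall_lt_not_exists_sq_add_sq (k : ℕ) :
    ∃ x, ∀ i < k, ¬ ∃ a b, x + i + 1 = a ^ 2 + b ^ 2 := by
  set q := nth fun p => p.Prime ∧ p ≡ 3 [MOD 4]
  have hinf : {p | p.Prime ∧ p ≡ 3 [MOD 4]}.Infinite :=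
    infinite_setOfPred_prime_and_modEq (by norm_num) (by norm_num)
  have hq (i : ℕ) : (q i).Prime ∧ q i ≡ 3 [MOD 4] := nth_mem_of_infinite hinf i
  have hq_mono : StrictMono q := nth_strictMono hinf
  have hcop : Set.Pairwise (Finset.range k : Set ℕ) (Coprime on fun i => q i ^ 2) :=
    fun i _ j _ hij => ((coprime_primes (hq i).1 (hq j).1).2 (hq_mono.injective.ne hij)).pow 2 2
  obtain ⟨x, hx⟩ := chineseRemainderOfFinset (fun i => q i ^ 2 + q i - (i + 1))
    (fun i => q i ^ 2) (Finset.range k) (fun i _ => pow_ne_zero 2 (hq i).1.ne_zero) hcop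
  refine ⟨x, fun i hi => not_exists_sq_add_sq_of_modEq_sq (hq i).1 (hq i).2 ?_⟩
  have hle : i + 1 ≤ q i ^ 2 + q i := by
    have : i ≤ q i := hq_mono.id_le i
    have := (hq i).1.one_lt
    nlinarith
  calc x + i + 1 = x + (i + 1) := by ring
    _ ≡ q i ^ 2 + q i - (i + 1) + (i + 1) [MOD q i ^ 2] :=
      (hx i (Finset.mem_range.2 hi)).add_right _
    _ = q i ^ 2 + q i := Nat.sub_add_cancel hle
    _ ≡ q i [MOD q i ^ 2] := by simp [Nat.ModEq]

theorem exists_pos_forall_gt_add_of_forall_exists_gap {S : ℕ → Prop} (h1 : S 1)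
    (hgap : ∀ k, ∃ x, ∀ i < k, ¬ S (x + i + 1)) (k : ℕ) :
    ∃ m, 0 < m ∧ S m ∧ ∀ n, m < n → S n → m + k < n := by
  classical
  obtain ⟨x, hx⟩ := hgap (k + 1)
  have hx1 : 1 ≤ x := by
    by_contra! hx0
    exact hx 0 k.succ_pos (by simpa [lt_one_iff.1 hx0] using h1)
  refine ⟨findGreatest S x, le_findGreatest hx1 h1, findGreatest_spec hx1 h1, fun n hmn hn => ?_⟩
  have hxn : x < n := lt_of_not_ge fun hnx => findGreatest_is_greatest hmn hnx hn
  have hxkn : x + (k + 1) < n := lt_of_not_ge fun hnx =>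
    hx (n - x - 1) (by omega) (by rwa [show x + (n - x - 1) + 1 = n by omega])
  have := findGreatest_le (P := S) x
  omega

theorem exists_sq_add_sq_of_int {n : ℕ} (h : ∃ j : ℤ × ℤ, (n : ℤ) = j.1 ^ 2 + j.2 ^ 2) :
    ∃ a b, n = a ^ 2 + b ^ 2 := by
  obtain ⟨j, hj⟩ := h
  refine ⟨j.1.natAbs, j.2.natAbs, ?_⟩
  zify
  simpa only [sq_abs] using hj

end Nat

theorem stokes_eigenvalue_gaps_unbounded_general (K : ℝ) :
    ∃ m : ℕ, 0 < m ∧ (∃ j : ℤ × ℤ, j ≠ 0 ∧ (m : ℤ) = j.1 ^ 2 + j.2 ^ 2) ∧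
      ∀ n : ℕ, m < n → (∃ j : ℤ × ℤ, j ≠ 0 ∧ (n : ℤ) = j.1 ^ 2 + j.2 ^ 2) →
        K < (n : ℝ) - (m : ℝ) := by
  obtain ⟨m, hm0, hm, hgap⟩ := Nat.exists_pos_forall_gt_add_of_forall_exists_gap
    (S := fun n : ℕ => ∃ j : ℤ × ℤ, j ≠ 0 ∧ (n : ℤ) = j.1 ^ 2 + j.2 ^ 2)
    ⟨(1, 0), by simp, by norm_num⟩
    (fun k => (Nat.exists_forall_lt_not_exists_sq_add_sq k).imp fun _ hx i hi ⟨j, _, hj⟩ =>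
      hx i hi (Nat.exists_sq_add_sq_of_int ⟨j, hj⟩))
    ⌈K⌉₊
  refine ⟨m, hm0, hm, fun n hmn hn => ?_⟩
  have : (m : ℝ) + ⌈K⌉₊ < n := by exact_mod_cast hgap n hmn hn
  linarith [Nat.le_ceil K]

/-- Spectral gap property of the Stokes operator on the 2D torus:
the increasing sequence of nonzero sums of two squares has unbounded gaps. -/
theorem stokes_eigenvalue_gaps_unbounded (K : ℝ) (hK : 0 < K) :
    ∃ m : ℕ, 0 < m ∧ (∃ j : ℤ × ℤ, j ≠ 0 ∧ (m : ℤ) = j.1 ^ 2 + j.2 ^ 2) ∧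
      ∀ n : ℕ, m < n → (∃ j : ℤ × ℤ, j ≠ 0 ∧ (n : ℤ) = j.1 ^ 2 + j.2 ^ 2) →
        K < (n : ℝ) - (m : ℝ) :=
  stokes_eigenvalue_gaps_unbounded_general K
end

section
/- For all real numbers L ≥ 1, ℏ with 0 < ℏ ≤ 1, and λ ≥ exp(60L²/ℏ), one has (1 − ℏ·(log λ)/λ)^{4/5} · (λ + ℏ·log λ) ≥ λ + 2L. -/
/-- For `0 < y ≤ 1` one has `5y/(4+y) ≤ y^(4/5)`. -/
lemma rpow_four_fifths_lower (y : ℝ) (h0 : 0 < y) (h1 : y ≤ 1) :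
    5 * y / (4 + y) ≤ y ^ ((4 : ℝ) / 5) := by
  have ht0 : 0 < y ^ ((1 : ℝ) / 5) := Real.rpow_pos_of_pos h0 _
  have ht5 : (y ^ ((1 : ℝ) / 5)) ^ (5 : ℕ) = y := by
    rw [← Real.rpow_natCast (y ^ ((1 : ℝ) / 5)) 5, ← Real.rpow_mul h0.le]
    norm_num
  have htle : y ^ ((1 : ℝ) / 5) ≤ (4 + y) / 5 := by
    refine le_of_pow_le_pow_left₀ (n := 5) (by norm_num) (by linarith) ?_
    rw [ht5]
    have hq : 0 ≤ y ^ 3 + 22 * y ^ 2 + 203 * y + 1024 := by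
      have h3 : 0 ≤ y ^ 3 := pow_nonneg h0.le 3
      have h2 : 0 ≤ y ^ 2 := sq_nonneg y
      linarith
    nlinarith [mul_nonneg (sq_nonneg (y - 1)) hq]
  have hty : y ^ ((4 : ℝ) / 5) = y / y ^ ((1 : ℝ) / 5) := by
    rw [eq_div_iff ht0.ne', ← Real.rpow_add h0]
    norm_num
  rw [hty, div_le_div_iff₀ (by linarith : (0:ℝ) < 4 + y) ht0]
  nlinarith [mul_le_mul_of_nonneg_left htle h0.le]

/-- Inequality (4.32) of the paper in the case α = 1/4. -/
theorem key_spatial_averaging_inequality (L h lam : ℝ) (hL : 1 ≤ L) (hh0 : 0 < h)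
    (hh1 : h ≤ 1) (hlam : Real.exp (60 * L ^ 2 / h) ≤ lam) :
    lam + 2 * L ≤ (1 - h * Real.log lam / lam) ^ ((4 : ℝ) / 5) * (lam + h * Real.log lam) := by
  have hlam0 : 0 < lam := lt_of_lt_of_le (Real.exp_pos _) hlam
  obtain ⟨a, ha_def⟩ : ∃ a : ℝ, a = h * Real.log lam := ⟨_, rfl⟩
  rw [← ha_def]
  obtain ⟨y, hy_def⟩ : ∃ y : ℝ, y = 1 - a / lam := ⟨_, rfl⟩
  rw [← hy_def]
  obtain ⟨s, hs_def⟩ : ∃ s : ℝ, s = Real.sqrt lam := ⟨_, rfl⟩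
  -- basic facts
  have hlog : 60 * L ^ 2 / h ≤ Real.log lam := (Real.le_log_iff_exp_le hlam0).mpr hlam
  have ha60sq : 60 * L ^ 2 ≤ a := by
    have h1 := mul_le_mul_of_nonneg_left hlog hh0.le
    have h2 : h * (60 * L ^ 2 / h) = 60 * L ^ 2 := by field_simp
    rw [h2] at h1
    rw [ha_def]
    exact h1
  have ha60L : 60 * L ≤ a := by nlinarith
  have ha0 : 0 ≤ a := by nlinarith
  have hexp60 : Real.exp 60 ≤ lam := by
    refine le_trans (Real.exp_le_exp.mpr ?_) hlam
    rw [le_div_iff₀ hh0]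
    nlinarith
  have hs0 : 0 < s := by rw [hs_def]; exact Real.sqrt_pos.mpr hlam0
  have hlam_eq : lam = s ^ 2 := by rw [hs_def]; exact (Real.sq_sqrt hlam0.le).symm
  have hs31 : 31 ≤ s := by
    have h30 : Real.exp 30 ≤ s := by
      rw [hs_def, Real.le_sqrt (Real.exp_pos 30).le hlam0.le]
      calc Real.exp 30 ^ 2 = Real.exp (30 + 30) := by rw [Real.exp_add]; ring
        _ ≤ lam := by norm_num [hexp60]
    have h31 : (31 : ℝ) ≤ Real.exp 30 := by
      have := Real.add_one_le_exp (30 : ℝ)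
      linarith
    linarith
  have hlog0 : 0 ≤ Real.log lam := by
    have : (0:ℝ) ≤ 60 * L ^ 2 / h := by positivity
    linarith
  have hl2s : Real.log lam ≤ 2 * s := by
    have h1 : Real.log s ≤ s - 1 := Real.log_le_sub_one_of_pos hs0
    have h2 : Real.log s = Real.log lam / 2 := by
      rw [hs_def, Real.log_sqrt hlam0.le]
    linarith
  have ha2s : a ≤ 2 * s := by
    have : a ≤ Real.log lam := by rw [ha_def]; nlinarith
    linarith
  have halam : a < lam := by nlinarith
  -- y is in (0, 1]
  have hy' : y * lam = lam - a := by
    rw [hy_def]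
    field_simp
  have hy0 : 0 < y := by
    have := (div_lt_one hlam0).mpr halam
    rw [hy_def]
    linarith
  have hy1 : y ≤ 1 := by
    have : 0 ≤ a / lam := div_nonneg ha0 hlam0.le
    rw [hy_def]
    linarith
  -- the key polynomial inequality
  have F : (lam + 2 * L) * (5 * lam - a) ≤ 5 * ((lam - a) * (lam + a)) := by
    have e3 : a * lam = a * s ^ 2 := by rw [hlam_eq]
    have e4 : L * lam = L * s ^ 2 := by rw [hlam_eq]
    have p1 : 0 ≤ a * (2 * s - a) := mul_nonneg ha0 (by linarith)
    have p2 : 0 ≤ (a - 60 * L) * s ^ 2 := mul_nonneg (by linarith) (sq_nonneg s)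
    have p3 : 0 ≤ a * s * (s - 12) := mul_nonneg (mul_nonneg ha0 hs0.le) (by linarith)
    have p4 : 0 ≤ a * L := mul_nonneg ha0 (by linarith)
    nlinarith [e3, e4, p1, p2, p3, p4]
  have key2 : (lam + 2 * L) * (4 + y) ≤ 5 * y * (lam + a) := by
    refine le_of_mul_le_mul_right ?_ hlam0
    have e1 : (lam + 2 * L) * (4 + y) * lam = (lam + 2 * L) * (5 * lam - a) := by
      linear_combination (lam + 2 * L) * hy'
    have e2 : 5 * y * (lam + a) * lam = 5 * ((lam - a) * (lam + a)) := by
      linear_combination 5 * (lam + a) * hy'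
    rw [e1, e2]
    exact F
  -- combine
  have hP : 0 ≤ lam + a := by linarith
  have h4y : (0:ℝ) < 4 + y := by linarith
  have hA : 5 * y / (4 + y) ≤ y ^ ((4 : ℝ) / 5) := rpow_four_fifths_lower y hy0 hy1
  calc lam + 2 * L ≤ 5 * y / (4 + y) * (lam + a) := by
        rw [div_mul_eq_mul_div, le_div_iff₀ h4y]
        nlinarith [key2]
    _ ≤ y ^ ((4 : ℝ) / 5) * (lam + a) := mul_le_mul_of_nonneg_right hA hP
end

section
/- Let (λ_j)_{j≥1} be a nondecreasing sequence of reals with λ₁ ≥ 1, let α ∈ (0,1), L ≥ 0, and N ≥ 1 with λ_N < λ_{N+1}. Set G = (λ_{N+1}^{1+α} − λ_N^{1+α})/(λ_{N+1}^α + λ_N^α) and γ = λ_N^α·λ_{N+1}^α·(λ_{N+1} + λ_N)/(λ_{N+1}^α + λ_N^α), and assume G > L; set μ = G − L. Then for every v ∈ ℓ² with Σ_j λ_j v_j² < ∞ and every w ∈ ℓ² with ‖w‖ ≤ L‖v‖, writing p = P_N v and q = Q_N v, one has: γ·(Σ_{j>N} λ_j^{−α} v_j² − Σ_{j≤N} λ_j^{−α}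 v_j²) − (Σ_{j>N} λ_j v_j² − Σ_{j≤N} λ_j v_j²) + ⟨w, p − q⟩ ≤ −μ·Σ_j λ_j^{−α} v_j². -/
/-!
Write `φ(x) = γ x^{-α} - x`. The quadratic part of the left-hand side is `Σ_j ± φ(λ_j) v_j²`,
with the minus sign for `j ≤ N`. The constants `γ` and `G` are exactly those for which
`φ(λ_N) = G` and `φ(λ_{N+1}) = -G`; as `φ` is decreasing, every coefficient is at most `-G`.
Cauchy–Schwarz bounds the cross term by `L ‖v‖²`, and `λ_j^{-α} ≤ 1` turns `-(G - L) ‖v‖²`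
into the right-hand side.
-/

noncomputable section

/-- `Plow N v` keeps the entries with index `j ≤ N` (the projector `P_N`). -/
def Plow (N : ℕ+) (v : ℕ+ → ℝ) : ℕ+ → ℝ := fun j => if j ≤ N then v j else 0

/-- `Qhigh N v` keeps the entries with index `j > N` (the projector `Q_N`). -/
def Qhigh (N : ℕ+) (v : ℕ+ → ℝ) : ℕ+ → ℝ := fun j => if j ≤ N then 0 else v j

/-- `PkOp lam k N v` keeps exactly the entries with `λ_j < λ_N − k`. -/
def PkOp (lam : ℕ+ → ℝ) (k : ℝ) (N : ℕ+) (v : ℕ+ → ℝ) : ℕ+ → ℝ :=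
  fun j => if lam j < lam N - k then v j else 0

/-- `RkOp lam k N v` keeps exactly the entries with `λ_N − k ≤ λ_j ≤ λ_N + k`. -/
def RkOp (lam : ℕ+ → ℝ) (k : ℝ) (N : ℕ+) (v : ℕ+ → ℝ) : ℕ+ → ℝ :=
  fun j => if lam N - k ≤ lam j ∧ lam j ≤ lam N + k then v j else 0

/-- `QkOp lam k N v` keeps exactly the entries with `λ_j > λ_N + k`. -/
def QkOp (lam : ℕ+ → ℝ) (k : ℝ) (N : ℕ+) (v : ℕ+ → ℝ) : ℕ+ → ℝ :=
  fun j => if lam N + k < lam j then v j else 0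

/-- Squared `ℓ²` norm. -/
def nsq (v : ℕ+ → ℝ) : ℝ := ∑' j, (v j) ^ 2

/-- Squared norm `‖A^s v‖² = Σ_j λ_j^{2s} v_j²` of the diagonal operator power. -/
def asq (lam : ℕ+ → ℝ) (s : ℝ) (v : ℕ+ → ℝ) : ℝ := ∑' j, lam j ^ (2 * s) * (v j) ^ 2

open Real

theorem tsum_mul_le_sqrt_mul_sqrt {ι : Type*} {f g : ι → ℝ} (hf : Summable fun i => f i ^ 2)
    (hg : Summable fun i => g i ^ 2) :
    ∑' i, f i * g i ≤ √(∑' i, f i ^ 2) * √(∑' i, g i ^ 2) := by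
  have hf' : Summable fun i => |f i| ^ (2 : ℝ) := by simpa only [rpow_two, sq_abs] using hf
  have hg' : Summable fun i => |g i| ^ (2 : ℝ) := by simpa only [rpow_two, sq_abs] using hg
  have holder := inner_le_Lp_mul_Lq_tsum_of_nonneg HolderConjugate.two_two
    (fun i => abs_nonneg (f i)) (fun i => abs_nonneg (g i)) hf' hg'
  have habs : Summable fun i => |f i| * |g i| := summable_mul_of_Lp_Lq_of_nonneg
    HolderConjugate.two_two (fun i => abs_nonneg (f i)) (fun i => abs_nonneg (g i)) hf' hg'
  simp only [rpow_two, sq_abs, ← sqrt_eq_rpow] at holder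
  have hfg : Summable fun i => f i * g i := .of_abs (by simpa only [abs_mul] using habs)
  exact (hfg.tsum_le_tsum (fun i => (le_abs_self _).trans (abs_mul _ _).le) habs).trans holder

theorem tsum_mul_le_of_tsum_sq_le {ι : Type*} {w u : ι → ℝ} {L : ℝ} (hL : 0 ≤ L)
    (hw : Summable fun i => w i ^ 2) (hu : Summable fun i => u i ^ 2)
    (hwu : ∑' i, w i ^ 2 ≤ L ^ 2 * ∑' i, u i ^ 2) :
    ∑' i, w i * u i ≤ L * ∑' i, u i ^ 2 := by
  have hU : 0 ≤ ∑' i, u i ^ 2 := tsum_nonneg fun i => sq_nonneg (u i)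
  calc ∑' i, w i * u i ≤ √(∑' i, w i ^ 2) * √(∑' i, u i ^ 2) := tsum_mul_le_sqrt_mul_sqrt hw hu
    _ ≤ √(L ^ 2 * ∑' i, u i ^ 2) * √(∑' i, u i ^ 2) := by gcongr
    _ = L * ∑' i, u i ^ 2 := by
      rw [sqrt_mul (sq_nonneg L), sqrt_sq hL, mul_assoc, mul_self_sqrt hU]

section Projections

variable {N : ℕ+} {a v : ℕ+ → ℝ}

theorem Plow_sub_Qhigh_sq (j : ℕ+) : (Plow N v j - Qhigh N v j) ^ 2 = v j ^ 2 := by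
  unfold Plow Qhigh
  split_ifs <;> ring

theorem summable_mul_Plow_sq (h : Summable fun j => a j * v j ^ 2) :
    Summable fun j => a j * Plow N v j ^ 2 :=
  (h.indicator {j | j ≤ N}).congr fun j => by
    by_cases hj : j ≤ N <;> simp [Plow, Set.indicator, hj]

theorem summable_mul_Qhigh_sq (h : Summable fun j => a j * v j ^ 2) :
    Summable fun j => a j * Qhigh N v j ^ 2 :=
  (h.indicator {j | ¬j ≤ N}).congr fun j => by
    by_cases hj : j ≤ N <;> simp [Qhigh, Set.indicator, hj]

theorem quadratic_form_Qhigh_Plow_le {b : ℕ+ → ℝ} {γ c : ℝ}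
    (ha : Summable fun j => a j * v j ^ 2) (hb : Summable fun j => b j * v j ^ 2)
    (hv : Summable fun j => v j ^ 2)
    (hlow : ∀ j ≤ N, c ≤ γ * a j - b j) (hhigh : ∀ j, N < j → γ * a j - b j ≤ -c) :
    γ * ((∑' j, a j * Qhigh N v j ^ 2) - ∑' j, a j * Plow N v j ^ 2) -
        ((∑' j, b j * Qhigh N v j ^ 2) - ∑' j, b j * Plow N v j ^ 2) ≤
      -c * ∑' j, v j ^ 2 := by
  refine hasSum_le (fun j => ?_)
    ((((summable_mul_Qhigh_sq ha).hasSum.sub (summable_mul_Plow_sq ha).hasSum).mul_left γ).sub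
      ((summable_mul_Qhigh_sq hb).hasSum.sub (summable_mul_Plow_sq hb).hasSum))
    (hv.hasSum.mul_left (-c))
  by_cases hj : j ≤ N
  · simp only [Qhigh, Plow, if_pos hj]
    linarith [mul_le_mul_of_nonneg_right (hlow j hj) (sq_nonneg (v j))]
  · simp only [Qhigh, Plow, if_neg hj]
    linarith [mul_le_mul_of_nonneg_right (hhigh j (not_le.1 hj)) (sq_nonneg (v j))]

end Projections

section SpectralGap

variable {a b α : ℝ}

theorem gap_coeff_rpow_neg_sub_left (ha : 0 < a) (hb : 0 < b) :
    a ^ α * b ^ α * (b + a) / (b ^ α + a ^ α) * a ^ (-α) - a =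
      (b ^ (1 + α) - a ^ (1 + α)) / (b ^ α + a ^ α) := by
  have hA := rpow_pos_of_pos ha α
  have hB := rpow_pos_of_pos hb α
  rw [rpow_neg ha.le, add_comm 1 α, rpow_add_one ha.ne', rpow_add_one hb.ne']
  field_simp
  ring

theorem gap_coeff_rpow_neg_sub_right (ha : 0 < a) (hb : 0 < b) :
    a ^ α * b ^ α * (b + a) / (b ^ α + a ^ α) * b ^ (-α) - b =
      -((b ^ (1 + α) - a ^ (1 + α)) / (b ^ α + a ^ α)) := by
  have hA := rpow_pos_of_pos ha α
  have hB := rpow_pos_of_pos hb α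
  rw [rpow_neg hb.le, add_comm 1 α, rpow_add_one ha.ne', rpow_add_one hb.ne']
  field_simp
  ring

theorem Monotone.antitone_mul_rpow_neg_sub {ι : Type*} [Preorder ι] {lam : ι → ℝ}
    (hmono : Monotone lam) (hpos : ∀ j, 0 < lam j) {γ : ℝ} (hγ : 0 ≤ γ) (hα : 0 ≤ α) :
    Antitone fun j => γ * lam j ^ (-α) - lam j := fun i j hij => by
  have hrpow := rpow_le_rpow_of_nonpos (hpos i) (hmono hij) (neg_nonpos.2 hα)
  linarith [mul_le_mul_of_nonneg_left hrpow hγ, hmono hij]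

end SpectralGap

theorem spectral_gap_strong_cone_general
    (lam : ℕ+ → ℝ) (hmono : Monotone lam) (hlam1 : 1 ≤ lam 1)
    (α : ℝ) (hα0 : 0 < α) (L : ℝ) (hL : 0 ≤ L)
    (N : ℕ+)
    (G γ μ : ℝ)
    (hG : G = (lam (N + 1) ^ (1 + α) - lam N ^ (1 + α)) / (lam (N + 1) ^ α + lam N ^ α))
    (hγ : γ = lam N ^ α * lam (N + 1) ^ α * (lam (N + 1) + lam N) /
      (lam (N + 1) ^ α + lam N ^ α))
    (hGL : G > L) (hμ : μ = G - L)
    (v w : ℕ+ → ℝ)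
    (hv2 : Summable fun j => (v j) ^ 2)
    (hv1 : Summable fun j => lam j * (v j) ^ 2)
    (hw2 : Summable fun j => (w j) ^ 2)
    (hwv : (∑' j, (w j) ^ 2) ≤ L ^ 2 * ∑' j, (v j) ^ 2) :
    γ * ((∑' j, lam j ^ (-α) * (Qhigh N v j) ^ 2) -
          (∑' j, lam j ^ (-α) * (Plow N v j) ^ 2)) -
        ((∑' j, lam j * (Qhigh N v j) ^ 2) - (∑' j, lam j * (Plow N v j) ^ 2)) +
        (∑' j, w j * (Plow N v j - Qhigh N v j)) ≤
      -μ * ∑' j, lam j ^ (-α) * (v j) ^ 2 := by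
  have hone : ∀ j, 1 ≤ lam j := fun j => hlam1.trans (hmono one_le)
  have hpos : ∀ j, 0 < lam j := fun j => one_pos.trans_le (hone j)
  have hweight : ∀ j, lam j ^ (-α) * v j ^ 2 ≤ v j ^ 2 := fun j =>
    mul_le_of_le_one_left (sq_nonneg _) (rpow_le_one_of_one_le_of_nonpos (hone j) (by linarith))
  have hsα : Summable fun j => lam j ^ (-α) * v j ^ 2 :=
    hv2.of_nonneg_of_le (fun j => mul_nonneg (rpow_nonneg (hpos j).le _) (sq_nonneg _)) hweight
  have hγ0 : 0 ≤ γ := by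
    have := hpos N; have := hpos (N + 1)
    rw [hγ]; positivity
  have hφ := hmono.antitone_mul_rpow_neg_sub hpos hγ0 hα0.le
  have hφN : γ * lam N ^ (-α) - lam N = G := by
    rw [hγ, hG]; exact gap_coeff_rpow_neg_sub_left (hpos N) (hpos (N + 1))
  have hφN1 : γ * lam (N + 1) ^ (-α) - lam (N + 1) = -G := by
    rw [hγ, hG]; exact gap_coeff_rpow_neg_sub_right (hpos N) (hpos (N + 1))
  have hquad := quadratic_form_Qhigh_Plow_le hsα hv1 hv2 (fun j hj => (hφ hj).trans_eq' hφN)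
    (fun j hj => (hφ (PNat.add_one_le_iff.2 hj)).trans_eq hφN1)
  have hcross : ∑' j, w j * (Plow N v j - Qhigh N v j) ≤ L * ∑' j, v j ^ 2 := by
    simp only [← Plow_sub_Qhigh_sq (N := N) (v := v)] at hv2 hwv ⊢
    exact tsum_mul_le_of_tsum_sq_le hL hw2 hv2 hwv
  have hμS := mul_le_mul_of_nonneg_left (hsα.tsum_le_tsum hweight hv2) (sub_nonneg.2 hGL.le)
  rw [hμ]
  linarith

/-- Theorem 4.1 of the paper (pointwise form): the sharp spectral gap condition
implies the strong cone condition in `ℍ^{−α}`. -/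
theorem spectral_gap_strong_cone
    (lam : ℕ+ → ℝ) (hmono : Monotone lam) (hlam1 : 1 ≤ lam 1)
    (α : ℝ) (hα0 : 0 < α) (hα1 : α < 1) (L : ℝ) (hL : 0 ≤ L)
    (N : ℕ+) (hNgap : lam N < lam (N + 1))
    (G γ μ : ℝ)
    (hG : G = (lam (N + 1) ^ (1 + α) - lam N ^ (1 + α)) / (lam (N + 1) ^ α + lam N ^ α))
    (hγ : γ = lam N ^ α * lam (N + 1) ^ α * (lam (N + 1) + lam N) /
      (lam (N + 1) ^ α + lam N ^ α))
    (hGL : G > L) (hμ : μ = G - L)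
    (v w : ℕ+ → ℝ)
    (hv2 : Summable fun j => (v j) ^ 2)
    (hv1 : Summable fun j => lam j * (v j) ^ 2)
    (hw2 : Summable fun j => (w j) ^ 2)
    (hwv : (∑' j, (w j) ^ 2) ≤ L ^ 2 * ∑' j, (v j) ^ 2) :
    γ * ((∑' j, lam j ^ (-α) * (Qhigh N v j) ^ 2) -
          (∑' j, lam j ^ (-α) * (Plow N v j) ^ 2)) -
        ((∑' j, lam j * (Qhigh N v j) ^ 2) - (∑' j, lam j * (Plow N v j) ^ 2)) +
        (∑' j, w j * (Plow N v j - Qhigh N v j)) ≤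
      -μ * ∑' j, lam j ^ (-α) * (v j) ^ 2 :=
  spectral_gap_strong_cone_general lam hmono hlam1 α hα0 L hL N G γ μ hG hγ hGL hμ v w hv2 hv1 hw2
    hwv
end
end

section
/- Let (λ_j)_{j≥1} be a nondecreasing sequence of positive reals, α ∈ (0,1), and N ≥ 1 with λ_{N+1} − λ_N ≥ 1. Set γ = (λ_{N+1}^{1+α} + λ_N^{1+α})/2. Then for every v ∈ ℓ² with Σ_j λ_j^{1+α} v_j² < ∞, writing p = P_N v and q = Q_N v, one has: γ·(‖q‖² − ‖p‖²) − (‖A^{(1+α)/2} q‖² − ‖A^{(1+α)/2} p‖²) ≤ −((1+α)/2)·λ_N^α·‖v‖². -/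
/-!
With `μ_j = λ_j^{1+α}`, the left-hand side is `Σ_j (γ - μ_j)(q_j² - p_j²)`. As `μ` is monotone and `γ`
is the midpoint of `μ_N` and `μ_{N+1}`, each summand is at most `-(μ_{N+1} - μ_N)/2 · v_j²`: for
`j ≤ N` it is `(μ_j - γ) v_j² ≤ (μ_N - γ) v_j²`, for `j > N` it is `(γ - μ_j) v_j² ≤ (γ - μ_{N+1}) v_j²`.
The tangent-line inequality for the convex function `x ↦ x^{1+α}` and the gap `λ_{N+1} - λ_N ≥ 1`
give `μ_{N+1} - μ_N ≥ (1+α) λ_N^α`.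
-/

noncomputable section

open Real

theorem mul_rpow_sub_one_mul_sub_le_rpow_sub_rpow {a b p : ℝ} (ha : 0 < a) (hb : 0 ≤ b)
    (hp : 1 ≤ p) : p * a ^ (p - 1) * (b - a) ≤ b ^ p - a ^ p := by
  set s := (b - a) / a
  have hs : -1 ≤ s := by
    rw [le_div_iff₀ ha]
    linarith
  have hbernoulli : 1 + p * s ≤ (1 + s) ^ p := one_add_mul_self_le_rpow_one_add hs hp
  have hb_eq : a * (1 + s) = b := by
    simp only [s]
    field_simp
    ring
  have hpow : a ^ p = a ^ (p - 1) * a := by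
    rw [← rpow_add_one ha.ne', sub_add_cancel]
  calc p * a ^ (p - 1) * (b - a) = a ^ p * (p * s) := by
        rw [hpow]
        simp only [s]
        field_simp
    _ ≤ a ^ p * ((1 + s) ^ p - 1) := by
        gcongr
        linarith
    _ = b ^ p - a ^ p := by
        rw [← hb_eq, mul_rpow ha.le (by linarith)]
        ring

theorem abs_Plow_apply_le (N : ℕ+) (v : ℕ+ → ℝ) (j : ℕ+) : |Plow N v j| ≤ |v j| := by
  unfold Plow
  split_ifs <;> simp

theorem abs_Qhigh_apply_le (N : ℕ+) (v : ℕ+ → ℝ) (j : ℕ+) : |Qhigh N v j| ≤ |v j| := by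
  unfold Qhigh
  split_ifs <;> simp

theorem Summable.mul_sq_of_abs_le {ι : Type*} {μ v w : ι → ℝ}
    (hv : Summable fun j => μ j * v j ^ 2) (hw : ∀ j, |w j| ≤ |v j|) :
    Summable fun j => μ j * w j ^ 2 :=
  hv.norm.of_norm_bounded fun j => by
    simp only [norm_mul, norm_pow, Real.norm_eq_abs, sq_abs]
    exact mul_le_mul_of_nonneg_left (sq_le_sq.mpr (hw j)) (abs_nonneg _)

theorem midpoint_mul_sq_Qhigh_sub_sq_Plow_le {μ : ℕ+ → ℝ} (hμ : Monotone μ) (N : ℕ+)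
    (v : ℕ+ → ℝ) (j : ℕ+) :
    (μ (N + 1) + μ N) / 2 * (Qhigh N v j ^ 2 - Plow N v j ^ 2) -
        (μ j * Qhigh N v j ^ 2 - μ j * Plow N v j ^ 2) ≤
      -((μ (N + 1) - μ N) / 2) * v j ^ 2 := by
  rcases le_or_gt j N with hj | hj
  · have hμj := hμ hj
    simp only [Qhigh, Plow, hj, if_true]
    nlinarith [sq_nonneg (v j)]
  · have hμj : μ (N + 1) ≤ μ j := hμ (PNat.add_one_le_iff.mpr hj)
    simp only [Qhigh, Plow, not_le.mpr hj, if_false]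
    nlinarith [sq_nonneg (v j)]

theorem midpoint_mul_nsq_sub_le {μ : ℕ+ → ℝ} (hμ : Monotone μ) (N : ℕ+) {v : ℕ+ → ℝ}
    (hv2 : Summable fun j => v j ^ 2) (hv : Summable fun j => μ j * v j ^ 2) :
    (μ (N + 1) + μ N) / 2 * (nsq (Qhigh N v) - nsq (Plow N v)) -
        ((∑' j, μ j * Qhigh N v j ^ 2) - ∑' j, μ j * Plow N v j ^ 2) ≤
      -((μ (N + 1) - μ N) / 2) * nsq v := by
  have hq2 : Summable fun j => Qhigh N v j ^ 2 := hv2.of_nonneg_of_le (fun j => sq_nonneg _)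
    fun j => sq_le_sq.mpr (abs_Qhigh_apply_le N v j)
  have hp2 : Summable fun j => Plow N v j ^ 2 := hv2.of_nonneg_of_le (fun j => sq_nonneg _)
    fun j => sq_le_sq.mpr (abs_Plow_apply_le N v j)
  have hqμ := hv.mul_sq_of_abs_le (abs_Qhigh_apply_le N v)
  have hpμ := hv.mul_sq_of_abs_le (abs_Plow_apply_le N v)
  exact hasSum_le (midpoint_mul_sq_Qhigh_sub_sq_Plow_le hμ N v)
    (((hq2.hasSum.sub hp2.hasSum).mul_left _).sub (hqμ.hasSum.sub hpμ.hasSum))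
    (hv2.hasSum.mul_left _)

theorem IVpq_estimate_general
    (lam : ℕ+ → ℝ) (hmono : Monotone lam) (hpos : ∀ j, 0 < lam j)
    (α : ℝ) (hα0 : 0 < α)
    (N : ℕ+) (hgap : 1 ≤ lam (N + 1) - lam N)
    (γ : ℝ) (hγ : γ = (lam (N + 1) ^ (1 + α) + lam N ^ (1 + α)) / 2)
    (v : ℕ+ → ℝ)
    (hv2 : Summable fun j => (v j) ^ 2)
    (hv : Summable fun j => lam j ^ (1 + α) * (v j) ^ 2) :
    γ * (nsq (Qhigh N v) - nsq (Plow N v)) -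
        (asq lam ((1 + α) / 2) (Qhigh N v) - asq lam ((1 + α) / 2) (Plow N v)) ≤
      -((1 + α) / 2) * lam N ^ α * nsq v := by
  set μ : ℕ+ → ℝ := fun j => lam j ^ (1 + α)
  have hμ : Monotone μ := fun i j hij =>
    rpow_le_rpow (hpos i).le (hmono hij) (by linarith)
  have hconvex : (1 + α) * lam N ^ α * (lam (N + 1) - lam N) ≤ μ (N + 1) - μ N := by
    simpa using mul_rpow_sub_one_mul_sub_le_rpow_sub_rpow (hpos N) (hpos (N + 1)).le
      (p := 1 + α) (by linarith)
  have hincrement : (1 + α) * lam N ^ α ≤ μ (N + 1) - μ N :=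
    (le_mul_of_one_le_right (by have := hpos N; positivity) hgap).trans hconvex
  have hnsq : 0 ≤ nsq v := tsum_nonneg fun j => sq_nonneg (v j)
  have hexp : 2 * ((1 + α) / 2) = 1 + α := by ring
  calc _ = (μ (N + 1) + μ N) / 2 * (nsq (Qhigh N v) - nsq (Plow N v)) -
          ((∑' j, μ j * Qhigh N v j ^ 2) - ∑' j, μ j * Plow N v j ^ 2) := by
        rw [hγ, asq, asq, hexp]
    _ ≤ -((μ (N + 1) - μ N) / 2) * nsq v := midpoint_mul_nsq_sub_le hμ N hv2 hv
    _ ≤ -((1 + α) / 2) * lam N ^ α * nsq v := by nlinarith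

/-- Lemma 6.2 of the paper: estimate of the term `I_{V,p,q}`. -/
theorem IVpq_estimate
    (lam : ℕ+ → ℝ) (hmono : Monotone lam) (hpos : ∀ j, 0 < lam j)
    (α : ℝ) (hα0 : 0 < α) (hα1 : α < 1)
    (N : ℕ+) (hgap : 1 ≤ lam (N + 1) - lam N)
    (γ : ℝ) (hγ : γ = (lam (N + 1) ^ (1 + α) + lam N ^ (1 + α)) / 2)
    (v : ℕ+ → ℝ)
    (hv2 : Summable fun j => (v j) ^ 2)
    (hv : Summable fun j => lam j ^ (1 + α) * (v j) ^ 2) :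
    γ * (nsq (Qhigh N v) - nsq (Plow N v)) -
        (asq lam ((1 + α) / 2) (Qhigh N v) - asq lam ((1 + α) / 2) (Plow N v)) ≤
      -((1 + α) / 2) * lam N ^ α * nsq v :=
  IVpq_estimate_general lam hmono hpos α hα0 N hgap γ hγ v hv2 hv
end
end

section
/- Let (λ_j)_{j≥1} be a nondecreasing sequence of positive reals, α ∈ (0,1), N ≥ 1 with λ_{N+1} − λ_N ≥ 1, and k > 0 with λ_N > 2k. Set γ = (λ_{N+1}^{1+α} + λ_N^{1+α})/2. Then for every v ∈ ℓ² with Σ_j λ_j^{1+α} v_j² < ∞, writing p = P_N v, one has: γ·‖p‖² − ‖A^{(1+α)/2} p‖² ≥ ((1+α)·k/2)·λ_N^α·‖P_{k,N} v‖² + (λ_N^α/2)·‖R_{k,N} p‖². -/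
/-!
Only the entries `j ≤ N` of `p = P_N v` survive, so both sides are finite sums and it suffices
to compare weights entry by entry: `γ - λ_j^{1+α}` must dominate the weight of `v_j` on the left.
The tangent-line (Bernoulli) inequality for the convex map `x ↦ x^{1+α}` together with the
spectral gap `λ_{N+1} - λ_N ≥ 1` gives `γ - λ_N^{1+α} ≥ (1+α) λ_N^α / 2`, which pays for the
entries of `R_{k,N} p`. For the entries of `P_{k,N} v` one gains in addition
`λ_N^{1+α} - (λ_N - k)^{1+α} ≥ (1+α) k (λ_N - k)^α`, and `(λ_N - k)^α ≥ λ_N^α / 2` because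
`λ_N - k ≥ λ_N / 2` and `t ↦ t^α` is subadditive.
-/

noncomputable section

open Finset

namespace Real

theorem rpow_one_add_add_mul_sub_le {a b α : ℝ} (ha : 0 < a) (hb : 0 ≤ b) (hα : 0 ≤ α) :
    a ^ (1 + α) + (1 + α) * a ^ α * (b - a) ≤ b ^ (1 + α) := by
  have hbern := one_add_mul_self_le_rpow_one_add (s := (b - a) / a)
    (by rw [le_div_iff₀ ha]; linarith) (p := 1 + α) (by linarith)
  rw [show 1 + (b - a) / a = b / a by field_simp; ring, div_rpow hb ha.le,
    le_div_iff₀ (rpow_pos_of_pos ha _)] at hbern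
  calc a ^ (1 + α) + (1 + α) * a ^ α * (b - a)
      = (1 + (1 + α) * ((b - a) / a)) * a ^ (1 + α) := by
        rw [rpow_add ha, rpow_one]; field_simp
    _ ≤ b ^ (1 + α) := hbern

theorem rpow_le_two_mul_rpow_of_half_le {x y α : ℝ} (hx : 0 ≤ x) (hxy : x / 2 ≤ y)
    (hα0 : 0 ≤ α) (hα1 : α ≤ 1) : x ^ α ≤ 2 * y ^ α :=
  calc x ^ α = (x / 2 + x / 2) ^ α := by rw [add_halves]
    _ ≤ (x / 2) ^ α + (x / 2) ^ α := rpow_add_le_add_rpow (by positivity) (by positivity) hα0 hα1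
    _ ≤ 2 * y ^ α := by
      have := rpow_le_rpow (by positivity) hxy hα0
      linarith

end Real

section Weights

open Real

variable {a b k α : ℝ}

theorem rpow_one_add_add_le_midpoint (ha : 0 < a) (hgap : 1 ≤ b - a) (hα : 0 ≤ α) :
    a ^ (1 + α) + (1 + α) * a ^ α / 2 ≤ (b ^ (1 + α) + a ^ (1 + α)) / 2 := by
  have htangent := rpow_one_add_add_mul_sub_le (b := b) ha (by linarith) hα
  have hslope : (1 + α) * a ^ α ≤ (1 + α) * a ^ α * (b - a) :=
    le_mul_of_one_le_right (by positivity) hgap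
  linarith

theorem half_rpow_le_midpoint_sub {x : ℝ} (ha : 0 < a) (hgap : 1 ≤ b - a) (hα : 0 ≤ α)
    (hx : 0 ≤ x) (hxa : x ≤ a) :
    a ^ α / 2 ≤ (b ^ (1 + α) + a ^ (1 + α)) / 2 - x ^ (1 + α) := by
  have hmid := rpow_one_add_add_le_midpoint ha hgap hα
  have hxa' : x ^ (1 + α) ≤ a ^ (1 + α) := rpow_le_rpow hx hxa (by linarith)
  have : 0 ≤ α * a ^ α := by positivity
  linarith

theorem mul_rpow_le_midpoint_sub {x : ℝ} (ha : 0 < a) (hgap : 1 ≤ b - a) (hα0 : 0 ≤ α)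
    (hα1 : α ≤ 1) (hk : 0 ≤ k) (hka : 2 * k < a) (hx : 0 ≤ x) (hxk : x < a - k) :
    (1 + α) * k / 2 * a ^ α ≤ (b ^ (1 + α) + a ^ (1 + α)) / 2 - x ^ (1 + α) := by
  have hmid := rpow_one_add_add_le_midpoint ha hgap hα0
  have hak : 0 < a - k := by linarith
  have htangent := rpow_one_add_add_mul_sub_le hak ha.le hα0
  have hxak : x ^ (1 + α) ≤ (a - k) ^ (1 + α) := rpow_le_rpow hx hxk.le (by linarith)
  have hhalf : a ^ α ≤ 2 * (a - k) ^ α :=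
    rpow_le_two_mul_rpow_of_half_le ha.le (by linarith) hα0 hα1
  have hgain : (1 + α) * k / 2 * a ^ α ≤ (1 + α) * (a - k) ^ α * (a - (a - k)) :=
    calc (1 + α) * k / 2 * a ^ α ≤ (1 + α) * k / 2 * (2 * (a - k) ^ α) := by gcongr
      _ = (1 + α) * (a - k) ^ α * (a - (a - k)) := by ring
  have : 0 ≤ (1 + α) * a ^ α := by positivity
  linarith

end Weights

theorem tsum_eq_sum_Iic_of_lt {ι M : Type*} [LinearOrder ι] [LocallyFiniteOrderBot ι]
    [AddCommMonoid M] [TopologicalSpace M] {f : ι → M} {N : ι} (hf : ∀ j, N < j → f j = 0) :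
    ∑' j, f j = ∑ j ∈ Iic N, f j :=
  tsum_eq_sum fun j hj => hf j (by simpa using hj)

section Projections

variable {lam : ℕ+ → ℝ} {k : ℝ} {N j : ℕ+} {v : ℕ+ → ℝ}

theorem Plow_of_le (hj : j ≤ N) : Plow N v j = v j := if_pos hj

theorem Plow_of_lt (hj : N < j) : Plow N v j = 0 := if_neg hj.not_ge

theorem PkOp_of_lt (hmono : Monotone lam) (hk : 0 ≤ k) (hj : N < j) : PkOp lam k N v j = 0 :=
  if_neg fun h => by linarith [hmono hj.le]

theorem RkOp_Plow_of_lt (hj : N < j) : RkOp lam k N (Plow N v) j = 0 := by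
  simp only [RkOp, Plow_of_lt hj, ite_self]

theorem Ip_summand_le {α γ : ℝ} (hmono : Monotone lam) (hpos : ∀ j, 0 < lam j) (hα0 : 0 ≤ α)
    (hα1 : α ≤ 1) (hgap : 1 ≤ lam (N + 1) - lam N) (hk : 0 ≤ k) (hkN : 2 * k < lam N)
    (hγ : γ = (lam (N + 1) ^ (1 + α) + lam N ^ (1 + α)) / 2) (hj : j ≤ N) :
    (1 + α) * k / 2 * lam N ^ α * PkOp lam k N v j ^ 2 +
        lam N ^ α / 2 * RkOp lam k N (Plow N v) j ^ 2 ≤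
      γ * Plow N v j ^ 2 - lam j ^ (1 + α) * Plow N v j ^ 2 := by
  have hjN : lam j ≤ lam N := hmono hj
  rw [Plow_of_le hj, ← sub_mul, hγ]
  by_cases hjk : lam j < lam N - k
  · have hR : RkOp lam k N (Plow N v) j = 0 := if_neg fun h => by linarith [h.1]
    rw [PkOp, if_pos hjk, hR]
    have hweight := mul_rpow_le_midpoint_sub (hpos N) hgap hα0 hα1 hk hkN (hpos j).le hjk
    linarith [mul_le_mul_of_nonneg_right hweight (sq_nonneg (v j))]
  · have hR : RkOp lam k N (Plow N v) j = v j :=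
      (if_pos ⟨not_lt.mp hjk, by linarith⟩).trans (Plow_of_le hj)
    rw [PkOp, if_neg hjk, hR]
    have hweight := half_rpow_le_midpoint_sub (hpos N) hgap hα0 (hpos j).le hjN
    linarith [mul_le_mul_of_nonneg_right hweight (sq_nonneg (v j))]

end Projections

theorem Ip_estimate_general
    (lam : ℕ+ → ℝ) (hmono : Monotone lam) (hpos : ∀ j, 0 < lam j)
    (α : ℝ) (hα0 : 0 < α) (hα1 : α < 1)
    (N : ℕ+) (hgap : 1 ≤ lam (N + 1) - lam N)
    (k : ℝ) (hk : 0 < k) (hkN : 2 * k < lam N)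
    (γ : ℝ) (hγ : γ = (lam (N + 1) ^ (1 + α) + lam N ^ (1 + α)) / 2)
    (v : ℕ+ → ℝ) :
    ((1 + α) * k / 2) * lam N ^ α * nsq (PkOp lam k N v) +
        (lam N ^ α / 2) * nsq (RkOp lam k N (Plow N v)) ≤
      γ * nsq (Plow N v) - asq lam ((1 + α) / 2) (Plow N v) := by
  have hexp : 2 * ((1 + α) / 2) = 1 + α := by ring
  simp only [nsq, asq, hexp]
  rw [tsum_eq_sum_Iic_of_lt fun j hj => by rw [PkOp_of_lt hmono hk.le hj, zero_pow two_ne_zero],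
    tsum_eq_sum_Iic_of_lt fun j hj => by rw [RkOp_Plow_of_lt hj, zero_pow two_ne_zero],
    tsum_eq_sum_Iic_of_lt fun j hj => by rw [Plow_of_lt hj, zero_pow two_ne_zero],
    tsum_eq_sum_Iic_of_lt fun j hj => by rw [Plow_of_lt hj, zero_pow two_ne_zero, mul_zero],
    mul_sum, mul_sum, mul_sum, ← sum_add_distrib, ← sum_sub_distrib]
  exact sum_le_sum fun j hj => Ip_summand_le hmono hpos hα0.le hα1.le hgap hk.le hkN hγ (mem_Iic.mp hj)

/-- Lemma 6.3 of the paper: lower bound for the term `I_p`. -/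
theorem Ip_estimate
    (lam : ℕ+ → ℝ) (hmono : Monotone lam) (hpos : ∀ j, 0 < lam j)
    (α : ℝ) (hα0 : 0 < α) (hα1 : α < 1)
    (N : ℕ+) (hgap : 1 ≤ lam (N + 1) - lam N)
    (k : ℝ) (hk : 0 < k) (hkN : 2 * k < lam N)
    (γ : ℝ) (hγ : γ = (lam (N + 1) ^ (1 + α) + lam N ^ (1 + α)) / 2)
    (v : ℕ+ → ℝ)
    (hv2 : Summable fun j => (v j) ^ 2)
    (hv : Summable fun j => lam j ^ (1 + α) * (v j) ^ 2) :
    ((1 + α) * k / 2) * lam N ^ α * nsq (PkOp lam k N v) +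
        (lam N ^ α / 2) * nsq (RkOp lam k N (Plow N v)) ≤
      γ * nsq (Plow N v) - asq lam ((1 + α) / 2) (Plow N v) :=
  Ip_estimate_general lam hmono hpos α hα0 hα1 N hgap k hk hkN γ hγ v
end
end

section
/- Let (λ_j)_{j≥1} be a nondecreasing sequence of positive reals, α ∈ (0,1), N ≥ 1, and k > 0. Set γ = (λ_{N+1}^{1+α} + λ_N^{1+α})/2 and, for v ∈ ℓ² with Σ_j λ_j^{1+α} v_j² < ∞, write q = Q_N v. Then: (i) if λ_{N+1} − λ_N ≥ 1, then ‖A^{(1+α)/2} R_{k,N} q‖² − γ·‖R_{k,N} q‖² ≥ ((1+α)/2)·λ_N^α·‖R_{k,N} q‖²; and (ii) if L ≥ 0, k ≥ 2L and λ_{N+1} ≤ λ_N + 2L, then ‖A^{(1+α)/2} Q_{k,N} v‖² − γ·‖Q_{k,N} v‖² ≥ (1+α)·(k − 2L)·λ_{N+1}^α·‖Q_{k,N} v‖². -/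
noncomputable section

/-! Both estimates hold term by term: on the support of the projected vector, `λ_j ^ (1 + α) - γ`
dominates the claimed constant by the tangent-line (Bernoulli) bound for the convex function
`t ↦ t ^ (1 + α)` at `λ_N`, resp. `λ_{N+1}`; multiplying by `v_j ^ 2` and summing gives the
estimates. -/

lemma rpow_add_mul_rpow_sub_one_mul_sub_le {x y p : ℝ} (hx : 0 ≤ x) (hy : 0 < y) (hp : 1 ≤ p) :
    y ^ p + p * y ^ (p - 1) * (x - y) ≤ x ^ p := by
  have hs : -1 ≤ (x - y) / y := by
    rw [le_div_iff₀ hy]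
    linarith
  have hb := one_add_mul_self_le_rpow_one_add hs hp
  have hxy : 1 + (x - y) / y = x / y := by field_simp; ring
  rw [hxy, Real.div_rpow hx hy.le, le_div_iff₀ (Real.rpow_pos_of_pos hy p)] at hb
  have hyp : y ^ p = y * y ^ (p - 1) := by
    rw [← Real.rpow_one_add' hy.le (by linarith), add_sub_cancel]
  calc y ^ p + p * y ^ (p - 1) * (x - y) = (1 + p * ((x - y) / y)) * y ^ p := by
        rw [hyp]; field_simp
    _ ≤ x ^ p := hb

lemma rpow_sub_avg_rpow_ge_of_le {a b x p : ℝ} (ha : 0 < a) (hab : a ≤ b) (hbx : b ≤ x)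
    (hp : 1 ≤ p) :
    p / 2 * a ^ (p - 1) * (b - a) ≤ x ^ p - (b ^ p + a ^ p) / 2 := by
  have htangent := rpow_add_mul_rpow_sub_one_mul_sub_le (ha.le.trans hab) ha hp
  have hbx' : b ^ p ≤ x ^ p := Real.rpow_le_rpow (ha.le.trans hab) hbx (by linarith)
  linarith

lemma rpow_sub_avg_rpow_ge_of_add_le {a b d x p : ℝ} (ha : 0 ≤ a) (hb : 0 < b) (hab : a ≤ b)
    (hd : 0 ≤ d) (hx : b + d ≤ x) (hp : 1 ≤ p) :
    p * b ^ (p - 1) * d ≤ x ^ p - (b ^ p + a ^ p) / 2 := by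
  have htangent := rpow_add_mul_rpow_sub_one_mul_sub_le (x := x) (by linarith) hb hp
  have hslope : p * b ^ (p - 1) * d ≤ p * b ^ (p - 1) * (x - b) :=
    mul_le_mul_of_nonneg_left (by linarith) (by positivity)
  have hab' : a ^ p ≤ b ^ p := Real.rpow_le_rpow ha hab (by linarith)
  linarith

lemma sq_Qhigh_le (N : ℕ+) (v : ℕ+ → ℝ) (j : ℕ+) : Qhigh N v j ^ 2 ≤ v j ^ 2 := by
  unfold Qhigh; split_ifs <;> simp [sq_nonneg]

lemma sq_RkOp_le (lam : ℕ+ → ℝ) (k : ℝ) (N : ℕ+) (v : ℕ+ → ℝ) (j : ℕ+) :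
    RkOp lam k N v j ^ 2 ≤ v j ^ 2 := by
  unfold RkOp; split_ifs <;> simp [sq_nonneg]

lemma sq_QkOp_le (lam : ℕ+ → ℝ) (k : ℝ) (N : ℕ+) (v : ℕ+ → ℝ) (j : ℕ+) :
    QkOp lam k N v j ^ 2 ≤ v j ^ 2 := by
  unfold QkOp; split_ifs <;> simp [sq_nonneg]

lemma lt_of_Qhigh_ne_zero {N : ℕ+} {v : ℕ+ → ℝ} {j : ℕ+} (h : Qhigh N v j ≠ 0) : N < j := by
  by_contra hj
  exact h (if_pos (not_lt.mp hj))

lemma ne_zero_of_RkOp_ne_zero {lam : ℕ+ → ℝ} {k : ℝ} {N : ℕ+} {v : ℕ+ → ℝ} {j : ℕ+}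
    (h : RkOp lam k N v j ≠ 0) : v j ≠ 0 := by
  unfold RkOp at h; split_ifs at h
  exacts [h, absurd rfl h]

lemma lt_of_QkOp_ne_zero {lam : ℕ+ → ℝ} {k : ℝ} {N : ℕ+} {v : ℕ+ → ℝ} {j : ℕ+}
    (h : QkOp lam k N v j ≠ 0) : lam N + k < lam j := by
  by_contra hj
  exact h (if_neg hj)

lemma summable_mul_sq_of_sq_le {ι : Type*} {c v w : ι → ℝ} (hc : ∀ j, 0 ≤ c j)
    (hwv : ∀ j, w j ^ 2 ≤ v j ^ 2) (hv : Summable fun j => c j * v j ^ 2) :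
    Summable fun j => c j * w j ^ 2 :=
  hv.of_nonneg_of_le (fun j => mul_nonneg (hc j) (sq_nonneg _))
    fun j => mul_le_mul_of_nonneg_left (hwv j) (hc j)

lemma mul_nsq_le_asq_sub_mul_nsq {lam w : ℕ+ → ℝ} {p γ c : ℝ}
    (h2 : Summable fun j => w j ^ 2) (hp : Summable fun j => lam j ^ p * w j ^ 2)
    (hc : ∀ j, w j ≠ 0 → c ≤ lam j ^ p - γ) :
    c * nsq w ≤ asq lam (p / 2) w - γ * nsq w := by
  rw [asq, mul_div_cancel₀ p two_ne_zero, nsq, ← tsum_mul_left, ← tsum_mul_left,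
    ← hp.tsum_sub (h2.mul_left γ)]
  refine (h2.mul_left c).tsum_le_tsum (fun j => ?_) (hp.sub (h2.mul_left γ))
  by_cases hj : w j = 0
  · simp [hj]
  · nlinarith [hc j hj, sq_nonneg (w j)]

theorem Iq_estimates_general
    (lam : ℕ+ → ℝ) (hmono : Monotone lam) (hpos : ∀ j, 0 < lam j)
    (α : ℝ) (hα0 : 0 < α)
    (N : ℕ+) (k : ℝ)
    (γ : ℝ) (hγ : γ = (lam (N + 1) ^ (1 + α) + lam N ^ (1 + α)) / 2)
    (v : ℕ+ → ℝ)
    (hv2 : Summable fun j => (v j) ^ 2)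
    (hv : Summable fun j => lam j ^ (1 + α) * (v j) ^ 2) :
    (1 ≤ lam (N + 1) - lam N →
      ((1 + α) / 2) * lam N ^ α * nsq (RkOp lam k N (Qhigh N v)) ≤
        asq lam ((1 + α) / 2) (RkOp lam k N (Qhigh N v)) -
          γ * nsq (RkOp lam k N (Qhigh N v))) ∧
    (∀ L : ℝ, 0 ≤ L → 2 * L ≤ k → lam (N + 1) ≤ lam N + 2 * L →
      (1 + α) * (k - 2 * L) * lam (N + 1) ^ α * nsq (QkOp lam k N v) ≤
        asq lam ((1 + α) / 2) (QkOp lam k N v) - γ * nsq (QkOp lam k N v)) := by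
  have hp : 1 ≤ 1 + α := by linarith
  have hN : lam N ≤ lam (N + 1) := hmono (PNat.lt_add_right N 1).le
  have hweight : ∀ j, 0 ≤ lam j ^ (1 + α) := fun j => (Real.rpow_pos_of_pos (hpos j) _).le
  refine ⟨fun hgap => ?_, fun L hL hLk hlam => ?_⟩
  · have hw j : RkOp lam k N (Qhigh N v) j ^ 2 ≤ v j ^ 2 :=
      (sq_RkOp_le lam k N _ j).trans (sq_Qhigh_le N v j)
    refine mul_nsq_le_asq_sub_mul_nsq (hv2.of_nonneg_of_le (fun _ => sq_nonneg _) hw)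
      (summable_mul_sq_of_sq_le hweight hw hv) fun j hj => ?_
    have hNj : lam (N + 1) ≤ lam j :=
      hmono (PNat.add_one_le_iff.mpr (lt_of_Qhigh_ne_zero (ne_zero_of_RkOp_ne_zero hj)))
    have hbound := rpow_sub_avg_rpow_ge_of_le (hpos N) hN hNj hp
    rw [add_sub_cancel_left, ← hγ] at hbound
    exact (le_mul_of_one_le_right
      (mul_nonneg (by linarith) (Real.rpow_pos_of_pos (hpos N) α).le) hgap).trans hbound
  · have hw := sq_QkOp_le lam k N v
    refine mul_nsq_le_asq_sub_mul_nsq (hv2.of_nonneg_of_le (fun _ => sq_nonneg _) hw)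
      (summable_mul_sq_of_sq_le hweight hw hv) fun j hj => ?_
    have hgap : lam (N + 1) + (k - 2 * L) ≤ lam j := by linarith [lt_of_QkOp_ne_zero hj]
    have hbound := rpow_sub_avg_rpow_ge_of_add_le (hpos N).le (hpos (N + 1)) hN
      (sub_nonneg.mpr hLk) hgap hp
    rw [add_sub_cancel_left, ← hγ] at hbound
    linarith

/-- Estimates (6.22) and (6.23) of Lemma 6.4 of the paper. -/
theorem Iq_estimates
    (lam : ℕ+ → ℝ) (hmono : Monotone lam) (hpos : ∀ j, 0 < lam j)
    (α : ℝ) (hα0 : 0 < α) (hα1 : α < 1)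
    (N : ℕ+) (k : ℝ) (hk : 0 < k)
    (γ : ℝ) (hγ : γ = (lam (N + 1) ^ (1 + α) + lam N ^ (1 + α)) / 2)
    (v : ℕ+ → ℝ)
    (hv2 : Summable fun j => (v j) ^ 2)
    (hv : Summable fun j => lam j ^ (1 + α) * (v j) ^ 2) :
    (1 ≤ lam (N + 1) - lam N →
      ((1 + α) / 2) * lam N ^ α * nsq (RkOp lam k N (Qhigh N v)) ≤
        asq lam ((1 + α) / 2) (RkOp lam k N (Qhigh N v)) -
          γ * nsq (RkOp lam k N (Qhigh N v))) ∧
    (∀ L : ℝ, 0 ≤ L → 2 * L ≤ k → lam (N + 1) ≤ lam N + 2 * L →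
      (1 + α) * (k - 2 * L) * lam (N + 1) ^ α * nsq (QkOp lam k N v) ≤
        asq lam ((1 + α) / 2) (QkOp lam k N v) - γ * nsq (QkOp lam k N v)) :=
  Iq_estimates_general lam hmono hpos α hα0 N k γ hγ v hv2 hv
end
end

section
/- Let (λ_j)_{j≥1} be a nondecreasing sequence of positive reals, L ≥ 1, ℏ ∈ (0, 1/2], and N ≥ 1 with λ_N ≥ exp(60L²/ℏ) and 1 ≤ λ_{N+1} − λ_N ≤ 2L, and let k satisfy ℏ·log λ_N ≤ k < λ_N/2. Set γ = (λ_{N+1}^{5/4} + λ_N^{5/4})/2. Then for every v ∈ ℓ² with Σ_j λ_j^{5/4} v_j² < ∞, writing q = Q_N v, one has: ‖A^{5/8} q‖² − γ·‖q‖² ≥ (ℏ·log λ_N/(2·λ_N^{1/4}))·‖A^{1/4} Q_{k,N} v‖² + ((5/8)·(k − 2L))·λ_{N+1}^{1/4}·‖Q_{k,N} v‖² + (λ_N^{1/4}/2)·‖R_{k,N} q‖². -/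
noncomputable section

set_option maxHeartbeats 1000000

lemma bern_poly {A Y : ℝ} (hA : 0 ≤ A) (hAY : A ≤ Y) : 5/4*A*(Y^4 - A^4) ≤ Y^5 - A^5 := by
  have h0 : 0 ≤ Y := le_trans hA hAY
  nlinarith [mul_nonneg (sq_nonneg (Y-A)) (by positivity : (0:ℝ) ≤ 4*Y^3+3*A*Y^2+2*A^2*Y+A^3)]

lemma scalar_main {A B Y M k L : ℝ}
    (hA : 0 < A) (hAB : A ≤ B) (hgap2 : B^4 ≤ A^4 + 2*L)
    (hY : A^4 + k ≤ Y^4) (hYpos : 0 < Y)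
    (hMk : M ≤ k) (h2L : 2*L ≤ k) (hM : 0 < M) (hMa : M ≤ A^4/2) :
    M/(2*A) * Y^2 + (5/8*(k-2*L))*B ≤ Y^5 - (B^5 + A^5)/2 := by
  have hB : 0 < B := lt_of_lt_of_le hA hAB
  have hAY : A ≤ Y := by
    by_contra hc
    push_neg at hc
    have := pow_lt_pow_left₀ hc hYpos.le (by norm_num : 4 ≠ 0)
    nlinarith
  have hBY : B ≤ Y := by
    by_contra hc
    push_neg at hc
    have := pow_lt_pow_left₀ hc hYpos.le (by norm_num : 4 ≠ 0)
    nlinarith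
  have b1 := bern_poly hB.le hBY
  have b2 := bern_poly hA.le hAY
  have hseg : 0 ≤ Y^4 - A^4 - k := by linarith
  have claimA : 5/8*(k-2*L)*B + 5/8*A*(Y^4-A^4-k) ≤ 5/8*B*(Y^4-B^4) := by
    have h1 : A*(Y^4-A^4-k) ≤ B*(Y^4-B^4-(k-2*L)) :=
      mul_le_mul hAB (by linarith) hseg hB.le
    nlinarith
  have hx12 : Y^2*A^2 ≤ (Y^4 + A^4)/2 := by nlinarith [sq_nonneg (Y^2 - A^2)]
  have claimB : M/(2*A) * Y^2 ≤ 5/8*A*(Y^4-A^4-k) + 5/8*A*(Y^4-A^4) := by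
    rw [div_mul_eq_mul_div, div_le_iff₀ (by positivity)]
    have hA4 : (0:ℝ) ≤ A^4 := by positivity
    have key : (M*Y^2)*A^2 ≤ ((5/8*A*(Y^4-A^4-k) + 5/8*A*(Y^4-A^4))*(2*A))*A^2 := by
      have h1 : M*(Y^2*A^2) ≤ M*((Y^4+A^4)/2) := by nlinarith
      have h3 : M*(Y^4-A^4)/2 ≤ (A^4/2)*(Y^4-A^4)/2 := by nlinarith
      have h4 : M*A^4 + (A^4/2)*(Y^4-A^4)/2 ≤ (5/4)*A^4*(2*(Y^4-A^4)-k) := by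
        nlinarith [mul_le_mul_of_nonneg_left hMk hA4,
          mul_nonneg hA4 (by linarith : (0:ℝ) ≤ Y^4 - A^4 - k)]
      have hr : ((5/8*A*(Y^4-A^4-k) + 5/8*A*(Y^4-A^4))*(2*A))*A^2 = (5/4)*A^4*(2*(Y^4-A^4)-k) := by ring
      have h2 : M*((Y^4+A^4)/2) = M*A^4 + M*(Y^4-A^4)/2 := by ring
      linarith
    exact le_of_mul_le_mul_right key (pow_pos hA 2)
  linarith

lemma qp5 {t : ℝ} (ht : 0 ≤ t) : t ^ ((5:ℝ)/4) = (t ^ ((1:ℝ)/4)) ^ 5 := by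
  rw [← Real.rpow_natCast (t ^ ((1:ℝ)/4)) 5, ← Real.rpow_mul ht]; norm_num

lemma qp2 {t : ℝ} (ht : 0 ≤ t) : t ^ ((1:ℝ)/2) = (t ^ ((1:ℝ)/4)) ^ 2 := by
  rw [← Real.rpow_natCast (t ^ ((1:ℝ)/4)) 2, ← Real.rpow_mul ht]; norm_num

lemma qp4 {t : ℝ} (ht : 0 ≤ t) : (t ^ ((1:ℝ)/4)) ^ 4 = t := by
  rw [← Real.rpow_natCast (t ^ ((1:ℝ)/4)) 4, ← Real.rpow_mul ht]; norm_num

/-- Lemma 6.4 / Remark 6.5 of the paper, estimate (4.37), in the case α = 1/4. -/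
theorem Iq_full_estimate
    (lam : ℕ+ → ℝ) (hmono : Monotone lam) (hpos : ∀ j, 0 < lam j)
    (L : ℝ) (hL : 1 ≤ L) (h : ℝ) (hh0 : 0 < h) (hh1 : h ≤ 1 / 2)
    (N : ℕ+) (hlamN : Real.exp (60 * L ^ 2 / h) ≤ lam N)
    (hgap1 : 1 ≤ lam (N + 1) - lam N) (hgap2 : lam (N + 1) - lam N ≤ 2 * L)
    (k : ℝ) (hk1 : h * Real.log (lam N) ≤ k) (hk2 : k < lam N / 2)
    (γ : ℝ) (hγ : γ = (lam (N + 1) ^ ((5 : ℝ) / 4) + lam N ^ ((5 : ℝ) / 4)) / 2)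
    (v : ℕ+ → ℝ)
    (hv2 : Summable fun j => (v j) ^ 2)
    (hv : Summable fun j => lam j ^ ((5 : ℝ) / 4) * (v j) ^ 2) :
    (h * Real.log (lam N) / (2 * lam N ^ ((1 : ℝ) / 4))) * asq lam ((1 : ℝ) / 4) (QkOp lam k N v) +
        ((5 : ℝ) / 8 * (k - 2 * L)) * lam (N + 1) ^ ((1 : ℝ) / 4) * nsq (QkOp lam k N v) +
        (lam N ^ ((1 : ℝ) / 4) / 2) * nsq (RkOp lam k N (Qhigh N v)) ≤
      asq lam ((5 : ℝ) / 8) (Qhigh N v) - γ * nsq (Qhigh N v) := by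
  have ha : 0 < lam N := hpos N
  have hb : 0 < lam (N + 1) := hpos (N + 1)
  have hab : lam N ≤ lam (N + 1) := hmono (le_of_lt (PNat.lt_add_one_iff.mpr le_rfl))
  have hlog : 60 * L ^ 2 / h ≤ Real.log (lam N) := (Real.le_log_iff_exp_le ha).mpr hlamN
  have hlog0 : 0 ≤ Real.log (lam N) := le_trans (by positivity) hlog
  set M : ℝ := h * Real.log (lam N) with hM_def
  have hM60 : 60 * L ^ 2 ≤ M := by
    rw [hM_def]
    calc 60 * L ^ 2 = h * (60 * L ^ 2 / h) := by field_simp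
    _ ≤ h * Real.log (lam N) := mul_le_mul_of_nonneg_left hlog hh0.le
  have hMpos : 0 < M := lt_of_lt_of_le (by nlinarith) hM60
  have hMk : M ≤ k := hk1
  have h2Lk : 2 * L ≤ k := by nlinarith [sq_nonneg (L - 1)]
  have hk0 : 0 < k := lt_of_lt_of_le hMpos hMk
  have ha1 : (1:ℝ) ≤ lam N := le_trans (Real.one_le_exp (by positivity)) hlamN
  have hMa : M ≤ lam N / 2 := by
    have hls : Real.log (lam N) ≤ lam N := Real.log_le_self ha.le
    rw [hM_def]
    nlinarith [mul_le_mul_of_nonneg_right hh1 hlog0]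
  set C1 : ℝ := M / (2 * lam N ^ ((1 : ℝ) / 4)) with hC1
  set C2 : ℝ := ((5 : ℝ) / 8 * (k - 2 * L)) * lam (N + 1) ^ ((1 : ℝ) / 4) with hC2
  set C3 : ℝ := lam N ^ ((1 : ℝ) / 4) / 2 with hC3
  set w : ℕ+ → ℝ := QkOp lam k N v with hw
  set q : ℕ+ → ℝ := Qhigh N v with hq
  set r : ℕ+ → ℝ := RkOp lam k N q with hr
  -- entrywise comparisons
  have hq_le : ∀ j, (q j) ^ 2 ≤ (v j) ^ 2 := by
    intro j
    simp only [hq, Qhigh]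
    split
    · simpa using sq_nonneg (v j)
    · exact le_rfl
  have hw_le : ∀ j, (w j) ^ 2 ≤ (v j) ^ 2 := by
    intro j
    simp only [hw, QkOp]
    split
    · exact le_rfl
    · simpa using sq_nonneg (v j)
  have hr_le : ∀ j, (r j) ^ 2 ≤ (v j) ^ 2 := by
    intro j
    simp only [hr, RkOp]
    split
    · exact hq_le j
    · simpa using sq_nonneg (v j)
  -- summability
  have hq2 : Summable fun j => (q j) ^ 2 :=
    Summable.of_nonneg_of_le (fun j => sq_nonneg _) hq_le hv2
  have hw2 : Summable fun j => (w j) ^ 2 :=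
    Summable.of_nonneg_of_le (fun j => sq_nonneg _) hw_le hv2
  have hr2 : Summable fun j => (r j) ^ 2 :=
    Summable.of_nonneg_of_le (fun j => sq_nonneg _) hr_le hv2
  have hq54 : Summable fun j => lam j ^ ((5 : ℝ) / 4) * (q j) ^ 2 :=
    Summable.of_nonneg_of_le
      (fun j => mul_nonneg (Real.rpow_nonneg (hpos j).le _) (sq_nonneg _))
      (fun j => mul_le_mul_of_nonneg_left (hq_le j) (Real.rpow_nonneg (hpos j).le _)) hv
  have hw12 : Summable fun j => lam j ^ ((1 : ℝ) / 2) * (w j) ^ 2 := by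
    apply Summable.of_nonneg_of_le
      (fun j => mul_nonneg (Real.rpow_nonneg (hpos j).le _) (sq_nonneg _)) _ hv
    intro j
    by_cases hc : lam N + k < lam j
    · have hwj : w j = v j := by simp [hw, QkOp, hc]
      have h1j : (1:ℝ) ≤ lam j := le_trans ha1 (by linarith)
      rw [hwj]
      exact mul_le_mul_of_nonneg_right
        (Real.rpow_le_rpow_of_exponent_le h1j (by norm_num)) (sq_nonneg _)
    · have hwj : w j = 0 := by simp [hw, QkOp, hc]
      rw [hwj]
      simpa using mul_nonneg (Real.rpow_nonneg (hpos j).le _) (sq_nonneg (v j))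
  -- key pointwise inequality
  have hkey : ∀ j, C1 * (lam j ^ ((1 : ℝ) / 2) * (w j) ^ 2) + C2 * (w j) ^ 2
      + C3 * (r j) ^ 2 ≤ lam j ^ ((5 : ℝ) / 4) * (q j) ^ 2 - γ * (q j) ^ 2 := by
    intro j
    by_cases hjN : j ≤ N
    · have hqj : q j = 0 := by simp [hq, Qhigh, hjN]
      have hwj : w j = 0 := by
        have hle : lam j ≤ lam N := hmono hjN
        simp only [hw, QkOp]
        rw [if_neg (by push_neg; linarith)]
      have hrj : r j = 0 := by simp [hr, RkOp, hqj]
      simp [hqj, hwj, hrj]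
    · push_neg at hjN
      have hbj : lam (N + 1) ≤ lam j := hmono (PNat.add_one_le_iff.mpr hjN)
      have hqj : q j = v j := by simp [hq, Qhigh, hjN.not_ge]
      have hYe : (lam j ^ ((1:ℝ)/4)) ^ 4 = lam j := qp4 (hpos j).le
      have hAe : (lam N ^ ((1:ℝ)/4)) ^ 4 = lam N := qp4 ha.le
      have hBe : (lam (N + 1) ^ ((1:ℝ)/4)) ^ 4 = lam (N + 1) := qp4 hb.le
      have hA0 : 0 < lam N ^ ((1:ℝ)/4) := Real.rpow_pos_of_pos ha _
      have hB0 : 0 < lam (N + 1) ^ ((1:ℝ)/4) := Real.rpow_pos_of_pos hb _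
      have hY0 : 0 < lam j ^ ((1:ℝ)/4) := Real.rpow_pos_of_pos (hpos j) _
      have hABle : lam N ^ ((1:ℝ)/4) ≤ lam (N + 1) ^ ((1:ℝ)/4) :=
        Real.rpow_le_rpow ha.le hab (by norm_num)
      by_cases hX : lam N + k < lam j
      · have hwj : w j = v j := by simp [hw, QkOp, hX]
        have hrj : r j = 0 := by
          simp only [hr, RkOp]
          rw [if_neg]
          rintro ⟨-, h2⟩
          linarith
        have S := scalar_main (M := M) (k := k) (L := L) hA0 hABle
          (by rw [hAe, hBe]; linarith) (by rw [hAe, hYe]; linarith)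
          hY0 hMk h2Lk hMpos (by rw [hAe]; linarith)
        rw [hqj, hwj, hrj, hC1, hC2, hγ, qp2 (hpos j).le, qp5 (hpos j).le,
          qp5 ha.le, qp5 hb.le]
        nlinarith [mul_le_mul_of_nonneg_right S (sq_nonneg (v j))]
      · push_neg at hX
        have hwj : w j = 0 := by simp [hw, QkOp, hX.not_gt]
        have hrj : r j = v j := by
          simp only [hr, RkOp]
          rw [if_pos ⟨by linarith, hX⟩, hqj]
        have hBY : lam (N + 1) ^ ((1:ℝ)/4) ≤ lam j ^ ((1:ℝ)/4) :=
          Real.rpow_le_rpow hb.le hbj (by norm_num)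
        have bb := bern_poly hA0.le hABle
        have hp5 : (lam (N + 1) ^ ((1:ℝ)/4)) ^ 5 ≤ (lam j ^ ((1:ℝ)/4)) ^ 5 :=
          pow_le_pow_left₀ hB0.le hBY 5
        have h1BA : (1:ℝ) ≤ (lam (N + 1) ^ ((1:ℝ)/4)) ^ 4 - (lam N ^ ((1:ℝ)/4)) ^ 4 := by
          rw [hAe, hBe]; linarith
        have hscal : lam N ^ ((1:ℝ)/4) / 2 ≤ (lam j ^ ((1:ℝ)/4)) ^ 5
            - ((lam (N + 1) ^ ((1:ℝ)/4)) ^ 5 + (lam N ^ ((1:ℝ)/4)) ^ 5) / 2 := by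
          nlinarith [mul_le_mul_of_nonneg_left h1BA hA0.le]
        rw [hqj, hwj, hrj, hC3, hγ, qp5 (hpos j).le, qp5 ha.le, qp5 hb.le]
        nlinarith [mul_le_mul_of_nonneg_right hscal (sq_nonneg (v j))]
  -- assemble the sums
  simp only [asq, nsq]
  simp only [show (2 * ((1:ℝ)/4)) = (1:ℝ)/2 from by norm_num,
    show (2 * ((5:ℝ)/8)) = (5:ℝ)/4 from by norm_num]
  have S1 : Summable fun j => C1 * (lam j ^ ((1 : ℝ) / 2) * (w j) ^ 2) := hw12.mul_left C1
  have S2 : Summable fun j => C2 * (w j) ^ 2 := hw2.mul_left C2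
  have S3 : Summable fun j => C3 * (r j) ^ 2 := hr2.mul_left C3
  rw [← tsum_mul_left, ← tsum_mul_left, ← tsum_mul_left, ← tsum_mul_left,
    ← Summable.tsum_sub hq54 (hq2.mul_left γ), ← Summable.tsum_add S1 S2, ← Summable.tsum_add (S1.add S2) S3]
  exact Summable.tsum_le_tsum hkey ((S1.add S2).add S3) (hq54.sub (hq2.mul_left γ))
end
end

section
/- Let (λ_j)_{j≥1} be a nondecreasing sequence of positive reals, α ∈ (0,1), L ≥ 1, δ > 0, ℏ > 0, N ≥ 1 and 0 < k < λ_N with ℏ·log λ_N ≥ 60L². Let T : ℓ² → ℓ² be a linear map with ‖T u‖ ≤ L·‖u‖ for all u ∈ ℓ², satisfying the spatial averaging condition ‖R_{k,N}(T(R_{k,N} u))‖ ≤ δ·‖u‖ for all u ∈ ℓ². Then for every v ∈ ℓ² with Σ_j λ_j^{2α} v_j² < ∞, writing p = P_N v and q = Q_N v, one has: |⟨T v, A^α p − A^α q⟩| ≤ (δ + 2δ²/(ℏ·log λ_N) + 2^{1+2α}·δ² + 1/30)·λ_N^α·‖v‖² + (ℏ·log λ_N/(4·λ_N^α))·‖A^α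 Q_{k,N} v‖² + (1 + 2^{1+2α})·L²·λ_N^α·‖Q_{k,N} v‖² + (6 + 2^{1+2α})·L²·λ_N^α·‖P_{k,N} v‖² + (λ_N^α/4)·‖R_{k,N} q‖² + (λ_N^α/4)·‖R_{k,N} p‖². -/
set_option maxHeartbeats 1000000

noncomputable section

private lemma NLyoung (x y c : ℝ) (hc : 0 < c) : x * y ≤ c * x^2 + y^2/(4*c) := by
  have h : c*x^2 + y^2/(4*c) - x*y = (2*c*x - y)^2/(4*c) := by
    field_simp; ring
  have h2 : 0 ≤ (2*c*x - y)^2/(4*c) := by positivity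
  linarith

private lemma NLCS (f g : ℕ+ → ℝ) (hf : Summable fun j => (f j)^2)
    (hg : Summable fun j => (g j)^2) :
    |∑' j, f j * g j| ≤ Real.sqrt (∑' j, (f j)^2) * Real.sqrt (∑' j, (g j)^2) := by
  have hprod : Summable fun j => |f j * g j| := by
    refine Summable.of_nonneg_of_le (fun j => abs_nonneg _) (fun j => ?_)
      ((hf.add hg).mul_left (1/2))
    have h1 : |f j * g j| = |f j| * |g j| := abs_mul _ _
    nlinarith [sq_nonneg (|f j| - |g j|), sq_abs (f j), sq_abs (g j)]
  have h0 : |∑' j, f j * g j| ≤ ∑' j, |f j * g j| := by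
    simpa [Real.norm_eq_abs, abs_mul] using
      norm_tsum_le_tsum_norm (f := fun j => f j * g j)
        (by simpa [Real.norm_eq_abs, abs_mul] using hprod)
  have hprod' : Summable fun j => |f j| * |g j| := by
    simpa [abs_mul] using hprod
  simp only [abs_mul] at h0
  refine h0.trans (Summable.tsum_le_of_sum_le hprod' fun s => ?_)
  have h1 : ∑ j ∈ s, |f j| * |g j| ≤
      Real.sqrt (∑ j ∈ s, (f j)^2) * Real.sqrt (∑ j ∈ s, (g j)^2) := by
    have h2 := Real.sum_mul_le_sqrt_mul_sqrt s (fun j => |f j|) (fun j => |g j|)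
    simpa [sq_abs] using h2
  refine h1.trans (mul_le_mul ?_ ?_ (Real.sqrt_nonneg _) (Real.sqrt_nonneg _))
  · exact Real.sqrt_le_sqrt (Summable.sum_le_tsum s (fun j _ => sq_nonneg _) hf)
  · exact Real.sqrt_le_sqrt (Summable.sum_le_tsum s (fun j _ => sq_nonneg _) hg)

private lemma NLCSb {f g : ℕ+ → ℝ} {X Y : ℝ} (hX : 0 ≤ X) (hY : 0 ≤ Y)
    (hf : Summable fun j => (f j)^2) (hg : Summable fun j => (g j)^2)
    (hfX : (∑' j, (f j)^2) ≤ X^2) (hgY : (∑' j, (g j)^2) ≤ Y^2) :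
    |∑' j, f j * g j| ≤ X * Y := by
  refine (NLCS f g hf hg).trans ?_
  have h1 : Real.sqrt (∑' j, (f j)^2) ≤ X := (Real.sqrt_le_sqrt hfX).trans_eq (Real.sqrt_sq hX)
  have h2 : Real.sqrt (∑' j, (g j)^2) ≤ Y := (Real.sqrt_le_sqrt hgY).trans_eq (Real.sqrt_sq hY)
  exact mul_le_mul h1 h2 (Real.sqrt_nonneg _) hX

private lemma NLmul {f g : ℕ+ → ℝ} (hf : Summable fun j => (f j)^2)
    (hg : Summable fun j => (g j)^2) : Summable fun j => f j * g j := by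
  refine Summable.of_abs ?_
  refine Summable.of_nonneg_of_le (fun j => abs_nonneg _) (fun j => ?_)
    ((hf.add hg).mul_left (1/2))
  have h1 : |f j * g j| = |f j| * |g j| := abs_mul _ _
  nlinarith [sq_nonneg (|f j| - |g j|), sq_abs (f j), sq_abs (g j)]

private lemma NLmask {x : ℕ+ → ℝ} (hx : Summable fun j => (x j)^2) (c : ℕ+ → Prop)
    [DecidablePred c] : Summable fun j => (if c j then x j else 0)^2 := by
  refine Summable.of_nonneg_of_le (fun j => sq_nonneg _) (fun j => ?_) hx
  by_cases hcj : c j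
  · rw [if_pos hcj]
  · rw [if_neg hcj]; simpa using sq_nonneg (x j)

private lemma NLmask2 {x : ℕ+ → ℝ} (hx : Summable fun j => (x j)^2) (c : ℕ+ → Prop)
    [DecidablePred c] : Summable fun j => (if c j then 0 else x j)^2 := by
  refine Summable.of_nonneg_of_le (fun j => sq_nonneg _) (fun j => ?_) hx
  by_cases hcj : c j
  · rw [if_pos hcj]; simpa using sq_nonneg (x j)
  · rw [if_neg hcj]

private lemma NLscalar (L β δ Λ M a b r u s m : ℝ)
    (hL : 1 ≤ L) (hβ1 : 1 ≤ β) (hΛ : 0 < Λ) (hM : 60 * L^2 ≤ M)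
    (hu2 : u^2 = a^2 + b^2) (hs2 : s^2 = a^2 + r^2 + b^2) :
    (L*s)*(Λ*a) + (L*s)*m + (L*u)*(β*Λ*r) + Λ*((δ*s)*s) + (δ*s)*(Λ*r) ≤
      (δ + 2*δ^2/M + 2*β^2*δ^2 + 1/30) * Λ * s^2 + (M/(4*Λ)) * m^2
      + (1 + 2*β^2) * L^2 * Λ * b^2 + (6 + 2*β^2) * L^2 * Λ * a^2 + (Λ/4) * r^2 := by
  have hM0 : (0:ℝ) < M := lt_of_lt_of_le (by nlinarith) hM
  have hβ0 : (0:ℝ) < β := by linarith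
  have hL2 : (1:ℝ) ≤ L^2 := by nlinarith
  have hc : (0:ℝ) < 2*β^2 + 29/30 := by nlinarith
  have hc' : (2*β^2 + 29/30 : ℝ) ≠ 0 := ne_of_gt hc
  have A1 : (L*s)*(Λ*a) ≤ Λ * ((1/20)*s^2 + 5*(L^2*a^2)) := by
    have h1 := NLyoung (L*a) s 5 (by norm_num)
    calc (L*s)*(Λ*a) = Λ * ((L*a)*s) := by ring
    _ ≤ Λ * (5*(L*a)^2 + s^2/(4*5)) := mul_le_mul_of_nonneg_left h1 hΛ.le
    _ = Λ * ((1/20)*s^2 + 5*(L^2*a^2)) := by ring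
  have A2 : (L*s)*m ≤ (M/(4*Λ))*m^2 + (Λ/60)*s^2 := by
    have h1 := NLyoung m (L*s) (M/(4*Λ)) (by positivity)
    have h2 : (L*s)^2/(4*(M/(4*Λ))) = (Λ*L^2/M)*s^2 := by
      field_simp
    have h3 : (Λ*L^2/M)*s^2 ≤ (Λ/60)*s^2 := by
      apply mul_le_mul_of_nonneg_right _ (sq_nonneg s)
      rw [div_le_div_iff₀ hM0 (by norm_num)]
      nlinarith
    calc (L*s)*m = m*(L*s) := by ring
    _ ≤ (M/(4*Λ))*m^2 + (L*s)^2/(4*(M/(4*Λ))) := h1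
    _ = (M/(4*Λ))*m^2 + (Λ*L^2/M)*s^2 := by rw [h2]
    _ ≤ (M/(4*Λ))*m^2 + (Λ/60)*s^2 := by linarith
  have A3 : (L*u)*(β*Λ*r) ≤
      Λ*((2*β^2 + 29/30)*(L^2*u^2) + (β^2/(4*(2*β^2+29/30)))*r^2) := by
    have h1 := NLyoung (L*u) (β*r) (2*β^2+29/30) hc
    have h2 : (β*r)^2/(4*(2*β^2+29/30)) = (β^2/(4*(2*β^2+29/30)))*r^2 := by
      field_simp
    calc (L*u)*(β*Λ*r) = Λ*((L*u)*(β*r)) := by ring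
    _ ≤ Λ*((2*β^2+29/30)*(L*u)^2 + (β*r)^2/(4*(2*β^2+29/30))) :=
        mul_le_mul_of_nonneg_left h1 hΛ.le
    _ = Λ*((2*β^2 + 29/30)*(L^2*u^2) + (β^2/(4*(2*β^2+29/30)))*r^2) := by
        rw [h2]; ring
  have A4 : (δ*s)*(Λ*r) ≤ Λ*((2*β^2)*(δ^2*s^2) + (1/(8*β^2))*r^2) := by
    have hb2 : (0:ℝ) < 2*β^2 := by nlinarith
    have h1 := NLyoung (δ*s) r (2*β^2) hb2
    have h2 : r^2/(4*(2*β^2)) = (1/(8*β^2))*r^2 := by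
      rw [show (4*(2*β^2):ℝ) = 8*β^2 by ring, one_div, inv_mul_eq_div]
    calc (δ*s)*(Λ*r) = Λ*((δ*s)*r) := by ring
    _ ≤ Λ*((2*β^2)*(δ*s)^2 + r^2/(4*(2*β^2))) := mul_le_mul_of_nonneg_left h1 hΛ.le
    _ = Λ*((2*β^2)*(δ^2*s^2) + (1/(8*β^2))*r^2) := by rw [h2]; ring
  have Cr : β^2/(4*(2*β^2+29/30)) + 1/(8*β^2) ≤ 13/60 := by
    have hx : (1:ℝ) ≤ β^2 := by nlinarith
    have hxx : β^2 ≤ β^2*β^2 := by nlinarith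
    have hβne : (β:ℝ) ≠ 0 := ne_of_gt hβ0
    have key : 13/60 - (β^2/(4*(2*β^2+29/30)) + 1/(8*β^2))
        = (352*β^2*β^2 - (1168/15)*β^2 - 232)/(1920*(2*β^2+29/30)*β^2) := by
      field_simp
      ring
    have hnum : 0 ≤ 352*β^2*β^2 - (1168/15)*β^2 - 232 := by nlinarith [hx, hxx]
    have hden : 0 < 1920*(2*β^2+29/30)*β^2 := by positivity
    have := div_nonneg hnum hden.le
    linarith
  have n1 : 0 ≤ (L^2 - 1) * (Λ * a^2) := by
    have := sub_nonneg.2 hL2; positivity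
  have n2 : 0 ≤ (L^2 - 1) * (Λ * b^2) := by
    have := sub_nonneg.2 hL2; positivity
  have n3 : (β^2/(4*(2*β^2+29/30)) + 1/(8*β^2)) * (Λ*r^2) ≤ (13/60) * (Λ*r^2) :=
    mul_le_mul_of_nonneg_right Cr (by positivity)
  have n4 : 0 ≤ 2*δ^2/M * (Λ*(a^2+r^2+b^2)) := by positivity
  rw [hu2] at A3
  rw [hs2] at A1 A2 A4 ⊢
  have hss : Λ*((δ*s)*s) = δ*Λ*(a^2+r^2+b^2) := by
    rw [show (Λ*((δ*s)*s) : ℝ) = δ*Λ*s^2 by ring, hs2]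
  linarith [A1, A2, A3, A4, n1, n2, n3, n4, hss]

/-- Lemma 6.6 of the paper, estimate (4.38): the nonlinearity estimate in the
spatial averaging scheme, with `T` playing the role of the derivative `𝒻′(u)`. -/
theorem nonlinearity_estimate
    (lam : ℕ+ → ℝ) (hmono : Monotone lam) (hpos : ∀ j, 0 < lam j)
    (α : ℝ) (hα0 : 0 < α) (hα1 : α < 1)
    (L : ℝ) (hL : 1 ≤ L) (δ : ℝ) (hδ : 0 < δ) (h : ℝ) (hh : 0 < h)
    (N : ℕ+) (k : ℝ) (hk0 : 0 < k) (hkN : k < lam N)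
    (hlog : 60 * L ^ 2 ≤ h * Real.log (lam N))
    (T : (ℕ+ → ℝ) →ₗ[ℝ] (ℕ+ → ℝ))
    (hT : ∀ u : ℕ+ → ℝ, (Summable fun j => (u j) ^ 2) →
      (Summable fun j => (T u j) ^ 2) ∧ nsq (T u) ≤ L ^ 2 * nsq u)
    (hSAC : ∀ u : ℕ+ → ℝ, (Summable fun j => (u j) ^ 2) →
      nsq (RkOp lam k N (T (RkOp lam k N u))) ≤ δ ^ 2 * nsq u)
    (v : ℕ+ → ℝ)
    (hv2 : Summable fun j => (v j) ^ 2)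
    (hva : Summable fun j => lam j ^ (2 * α) * (v j) ^ 2) :
    |∑' j, T v j * (lam j ^ α * Plow N v j - lam j ^ α * Qhigh N v j)| ≤
      (δ + 2 * δ ^ 2 / (h * Real.log (lam N)) + 2 ^ (1 + 2 * α) * δ ^ 2 + 1 / 30) *
          lam N ^ α * nsq v +
        (h * Real.log (lam N) / (4 * lam N ^ α)) * asq lam α (QkOp lam k N v) +
        (1 + 2 ^ (1 + 2 * α)) * L ^ 2 * lam N ^ α * nsq (QkOp lam k N v) +
        (6 + 2 ^ (1 + 2 * α)) * L ^ 2 * lam N ^ α * nsq (PkOp lam k N v) +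
        (lam N ^ α / 4) * nsq (RkOp lam k N (Qhigh N v)) +
        (lam N ^ α / 4) * nsq (RkOp lam k N (Plow N v)) := by
  classical
  have hL0 : (0:ℝ) < L := by linarith
  have hlogpos : 0 < Real.log (lam N) := by
    rcases le_or_gt (Real.log (lam N)) 0 with hc | hc
    · exfalso
      have h1 : h * Real.log (lam N) ≤ 0 := mul_nonpos_of_nonneg_of_nonpos hh.le hc
      nlinarith
    · exact hc
  set Λ := lam N ^ α with hΛdef
  set β := (2:ℝ) ^ α with hβdef
  set M := h * Real.log (lam N) with hMdef
  set p := Plow N v with hpdef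
  set q := Qhigh N v with hqdef
  set vP := PkOp lam k N v with hvPdef
  set vR := RkOp lam k N v with hvRdef
  set vQ := QkOp lam k N v with hvQdef
  set Rp := RkOp lam k N p with hRpdef
  set Rq := RkOp lam k N q with hRqdef
  have hM0 : (0:ℝ) < M := by positivity
  have hMge : 60 * L^2 ≤ M := hlog
  have hΛ0 : (0:ℝ) < Λ := Real.rpow_pos_of_pos (hpos N) α
  have hβ1 : (1:ℝ) ≤ β := by
    rw [hβdef]
    calc (1:ℝ) = (2:ℝ)^(0:ℝ) := (Real.rpow_zero 2).symm
    _ ≤ (2:ℝ)^α := Real.rpow_le_rpow_of_exponent_le one_le_two hα0.le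
  have hβ2 : β ≤ 2 := by
    rw [hβdef]
    calc (2:ℝ)^α ≤ (2:ℝ)^(1:ℝ) := Real.rpow_le_rpow_of_exponent_le one_le_two hα1.le
    _ = 2 := Real.rpow_one 2
  have hβ0 : (0:ℝ) < β := by linarith
  have hpow2 : (2:ℝ) ^ (1 + 2*α) = 2 * β^2 := by
    rw [hβdef, show (1 + 2*α : ℝ) = 1 + (α + α) by ring, Real.rpow_add two_pos,
      Real.rpow_add two_pos, Real.rpow_one, sq]
  have hrsq : ∀ j, (lam j ^ α)^2 = lam j ^ (2*α) := fun j => by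
    rw [sq, ← Real.rpow_add (hpos j), two_mul]
  -- region facts
  have hPjN : ∀ j, lam j < lam N - k → j ≤ N := by
    intro j hj
    by_contra hn
    push_neg at hn
    have := hmono hn.le
    linarith
  have hPrp : ∀ j, lam j < lam N - k → lam j ^ α ≤ Λ := by
    intro j hj
    rw [hΛdef]
    exact Real.rpow_le_rpow (hpos j).le (by linarith) hα0.le
  have hQjN : ∀ j, lam N + k < lam j → ¬ (j ≤ N) := by
    intro j hj hle
    have := hmono hle
    linarith
  have hRub : ∀ j, lam j ≤ lam N + k → lam j ^ α ≤ β * Λ := by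
    intro j hj
    have h2 : lam j ≤ 2 * lam N := by linarith
    calc lam j ^ α ≤ (2 * lam N) ^ α := Real.rpow_le_rpow (hpos j).le h2 hα0.le
    _ = β * Λ := by
        rw [Real.mul_rpow (by norm_num : (0:ℝ) ≤ 2) (hpos N).le, hβdef, hΛdef]
  have hrnn : ∀ j, (0:ℝ) ≤ lam j ^ α := fun j => Real.rpow_nonneg (hpos j).le α
  -- trichotomy
  have htri : ∀ j, (lam j < lam N - k ∧ ¬(lam N - k ≤ lam j ∧ lam j ≤ lam N + k)
        ∧ ¬(lam N + k < lam j))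
      ∨ (¬(lam j < lam N - k) ∧ (lam N - k ≤ lam j ∧ lam j ≤ lam N + k)
        ∧ ¬(lam N + k < lam j))
      ∨ (¬(lam j < lam N - k) ∧ ¬(lam N - k ≤ lam j ∧ lam j ≤ lam N + k)
        ∧ (lam N + k < lam j)) := by
    intro j
    rcases lt_or_ge (lam j) (lam N - k) with h1 | h1
    · refine Or.inl ⟨h1, ?_, ?_⟩
      · rintro ⟨h2, _⟩; linarith
      · intro h2; linarith
    · rcases le_or_gt (lam j) (lam N + k) with h2 | h2
      · exact Or.inr (Or.inl ⟨not_lt.2 h1, ⟨h1, h2⟩, not_lt.2 h2⟩)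
      · refine Or.inr (Or.inr ⟨not_lt.2 h1, ?_, h2⟩)
        rintro ⟨_, h3⟩; linarith
  -- the weight function
  set W : ℕ+ → ℝ := fun j => lam j ^ α * p j - lam j ^ α * q j with hWdef
  set WP := PkOp lam k N W with hWPdef
  set WR := RkOp lam k N W with hWRdef
  set WQ := QkOp lam k N W with hWQdef
  set pq : ℕ+ → ℝ := fun j => p j - q j with hpqdef
  set z := RkOp lam k N pq with hzdef
  set d : ℕ+ → ℝ := fun j => WR j - Λ * z j with hddef
  set vPQ : ℕ+ → ℝ := fun j => vP j + vQ j with hvPQdef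
  set g := RkOp lam k N (T vR) with hgdef
  -- pointwise basics
  have hpq0 : ∀ j, p j * q j = 0 := by
    intro j
    by_cases hj : j ≤ N <;> simp [hpdef, hqdef, Plow, Qhigh, hj]
  have hvpq : ∀ j, v j = p j + q j := by
    intro j
    by_cases hj : j ≤ N <;> simp [hpdef, hqdef, Plow, Qhigh, hj]
  have hWsq : ∀ j, (W j)^2 = lam j ^ (2*α) * (v j)^2 := by
    intro j
    have h1 : W j = lam j ^ α * (p j - q j) := by rw [hWdef]; ring
    have h2 : (p j - q j)^2 = (v j)^2 := by
      rw [hvpq j]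
      linear_combination (-4 : ℝ) * hpq0 j
    calc (W j)^2 = (lam j ^ α)^2 * (p j - q j)^2 := by rw [h1]; ring
    _ = lam j ^ (2*α) * (v j)^2 := by rw [hrsq j, h2]
  -- pointwise region estimates
  have pw1 : ∀ j, (WP j)^2 ≤ Λ^2 * (vP j)^2 := by
    intro j
    rw [hWPdef, hvPdef]
    simp only [PkOp]
    by_cases hc : lam j < lam N - k
    · simp only [if_pos hc]
      have hjN : j ≤ N := hPjN j hc
      have hWj : W j = lam j ^ α * v j := by
        rw [hWdef]
        simp [hpdef, hqdef, Plow, Qhigh, hjN]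
      rw [hWj]
      have h1 := hrnn j
      have h2 := hPrp j hc
      nlinarith [sq_nonneg (v j), mul_self_le_mul_self h1 h2]
    · simp only [if_neg hc]
      simp
  have pw2 : ∀ j, (WQ j)^2 ≤ lam j ^ (2*α) * (vQ j)^2 := by
    intro j
    rw [hWQdef, hvQdef]
    simp only [QkOp]
    by_cases hc : lam N + k < lam j
    · simp only [if_pos hc]
      rw [hWsq j]
    · simp only [if_neg hc]
      simp [Real.rpow_nonneg (hpos j).le]
  have pw3 : ∀ j, (WR j)^2 ≤ (β*Λ)^2 * ((Rp j)^2 + (Rq j)^2) := by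
    intro j
    rw [hWRdef, hRpdef, hRqdef]
    simp only [RkOp]
    by_cases hc : lam N - k ≤ lam j ∧ lam j ≤ lam N + k
    · simp only [if_pos hc]
      have hWj : W j = lam j ^ α * (p j - q j) := by rw [hWdef]; ring
      have he : (p j - q j)^2 = (p j)^2 + (q j)^2 := by
        linear_combination (-2 : ℝ) * hpq0 j
      have h1 := hrnn j
      have h2 := hRub j hc.2
      calc (W j)^2 = (lam j ^ α)^2 * ((p j)^2 + (q j)^2) := by rw [hWj, mul_pow, he]
      _ ≤ (β*Λ)^2 * ((p j)^2 + (q j)^2) := by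
          have h3 : (lam j ^ α)^2 ≤ (β*Λ)^2 := by nlinarith [mul_self_le_mul_self h1 h2]
          have h4 : (0:ℝ) ≤ (p j)^2 + (q j)^2 := by positivity
          exact mul_le_mul_of_nonneg_right h3 h4
    · simp only [if_neg hc]
      simp
  have pwz : ∀ j, (z j)^2 = (Rp j)^2 + (Rq j)^2 := by
    intro j
    rw [hzdef, hRpdef, hRqdef]
    simp only [RkOp]
    by_cases hc : lam N - k ≤ lam j ∧ lam j ≤ lam N + k
    · simp only [if_pos hc]
      rw [hpqdef]
      linear_combination (-2 : ℝ) * hpq0 j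
    · simp only [if_neg hc]; simp
  have pwzv : ∀ j, (z j)^2 ≤ (v j)^2 := by
    intro j
    rw [hzdef]
    simp only [RkOp]
    by_cases hc : lam N - k ≤ lam j ∧ lam j ≤ lam N + k
    · simp only [if_pos hc]
      rw [hpqdef]
      have h2 : (p j - q j)^2 = (v j)^2 := by
        rw [hvpq j]; linear_combination (-4 : ℝ) * hpq0 j
      exact le_of_eq h2
    · simp only [if_neg hc]; simpa using sq_nonneg (v j)
  have pw4 : ∀ j, (d j)^2 ≤ Λ^2 * (z j)^2 := by
    intro j
    rw [hddef]
    simp only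
    rw [hWRdef, hzdef]
    simp only [RkOp]
    by_cases hc : lam N - k ≤ lam j ∧ lam j ≤ lam N + k
    · simp only [if_pos hc]
      have hWj : W j = lam j ^ α * (pq j) := by rw [hWdef, hpqdef]; ring
      have h1 := hrnn j
      have h2 := hRub j hc.2
      have hβΛ : β * Λ ≤ 2 * Λ := by nlinarith
      have key : (lam j ^ α - Λ)^2 ≤ Λ^2 := by nlinarith
      calc (W j - Λ * pq j)^2 = (lam j ^ α - Λ)^2 * (pq j)^2 := by rw [hWj]; ring
      _ ≤ Λ^2 * (pq j)^2 := mul_le_mul_of_nonneg_right key (sq_nonneg _)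
    · simp only [if_neg hc]
      simp
  have pw6 : ∀ j, (v j)^2 = (vP j)^2 + (vR j)^2 + (vQ j)^2 := by
    intro j
    rw [hvPdef, hvRdef, hvQdef]
    simp only [PkOp, RkOp, QkOp]
    rcases htri j with ⟨h1, h2, h3⟩ | ⟨h1, h2, h3⟩ | ⟨h1, h2, h3⟩
    · simp only [if_pos h1, if_neg h2, if_neg h3]; ring
    · simp only [if_neg h1, if_pos h2, if_neg h3]; ring
    · simp only [if_neg h1, if_neg h2, if_pos h3]; ring
  have pw7 : ∀ j, (vR j)^2 = (Rp j)^2 + (Rq j)^2 := by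
    intro j
    rw [hvRdef, hRpdef, hRqdef]
    simp only [RkOp]
    by_cases hc : lam N - k ≤ lam j ∧ lam j ≤ lam N + k
    · simp only [if_pos hc]
      rw [hvpq j]
      linear_combination (2 : ℝ) * hpq0 j
    · simp only [if_neg hc]; simp
  have pw8 : ∀ j, (vPQ j)^2 = (vP j)^2 + (vQ j)^2 := by
    intro j
    rw [hvPQdef]
    simp only
    have h0 : vP j * vQ j = 0 := by
      rw [hvPdef, hvQdef]
      simp only [PkOp, QkOp]
      by_cases hc : lam j < lam N - k
      · have : ¬ (lam N + k < lam j) := by intro hx; linarith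
        rw [if_pos hc, if_neg this, mul_zero]
      · rw [if_neg hc, zero_mul]
    linear_combination (2 : ℝ) * h0
  have pw9 : ∀ j, W j = WP j + WR j + WQ j := by
    intro j
    rw [hWPdef, hWRdef, hWQdef]
    simp only [PkOp, RkOp, QkOp]
    rcases htri j with ⟨h1, h2, h3⟩ | ⟨h1, h2, h3⟩ | ⟨h1, h2, h3⟩
    · simp only [if_pos h1, if_neg h2, if_neg h3]; ring
    · simp only [if_neg h1, if_pos h2, if_neg h3]; ring
    · simp only [if_neg h1, if_neg h2, if_pos h3]; ring
  have pw10 : ∀ j, v j = vPQ j + vR j := by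
    intro j
    rw [hvPQdef, hvPdef, hvQdef, hvRdef]
    simp only [PkOp, RkOp, QkOp]
    rcases htri j with ⟨h1, h2, h3⟩ | ⟨h1, h2, h3⟩ | ⟨h1, h2, h3⟩
    · simp only [if_pos h1, if_neg h2, if_neg h3]; ring
    · simp only [if_neg h1, if_pos h2, if_neg h3]; ring
    · simp only [if_neg h1, if_neg h2, if_pos h3]; ring
  have pw11 : ∀ j, T vR j * WR j = g j * WR j := by
    intro j
    rw [hgdef, hWRdef]
    simp only [RkOp]
    by_cases hc : lam N - k ≤ lam j ∧ lam j ≤ lam N + k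
    · simp only [if_pos hc]
    · simp only [if_neg hc, mul_zero, zero_mul]
  have pw12 : ∀ j, WR j = Λ * z j + d j := by
    intro j
    rw [hddef]
    ring
  -- summability
  have SP : Summable fun j => (vP j)^2 := by
    rw [hvPdef]; simp only [PkOp]; exact NLmask hv2 _
  have SQ : Summable fun j => (vQ j)^2 := by
    rw [hvQdef]; simp only [QkOp]; exact NLmask hv2 _
  have SR : Summable fun j => (vR j)^2 := by
    rw [hvRdef]; simp only [RkOp]; exact NLmask hv2 _
  have Sp : Summable fun j => (p j)^2 := by
    rw [hpdef]; simp only [Plow]; exact NLmask hv2 _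
  have Sq : Summable fun j => (q j)^2 := by
    rw [hqdef]; simp only [Qhigh]; exact NLmask2 hv2 _
  have SRp : Summable fun j => (Rp j)^2 := by
    rw [hRpdef]; simp only [RkOp]; exact NLmask Sp _
  have SRq : Summable fun j => (Rq j)^2 := by
    rw [hRqdef]; simp only [RkOp]; exact NLmask Sq _
  have SPQ : Summable fun j => (vPQ j)^2 := by
    refine Summable.of_nonneg_of_le (fun j => sq_nonneg _) (fun j => ?_) (SP.add SQ)
    rw [pw8 j]
  have SW : Summable fun j => (W j)^2 := by
    refine Summable.of_nonneg_of_le (fun j => sq_nonneg _) (fun j => le_of_eq (hWsq j)) hva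
  have SWP : Summable fun j => (WP j)^2 := by
    rw [hWPdef]; simp only [PkOp]; exact NLmask SW _
  have SWR : Summable fun j => (WR j)^2 := by
    rw [hWRdef]; simp only [RkOp]; exact NLmask SW _
  have SWQ : Summable fun j => (WQ j)^2 := by
    rw [hWQdef]; simp only [QkOp]; exact NLmask SW _
  have Sz : Summable fun j => (z j)^2 := by
    refine Summable.of_nonneg_of_le (fun j => sq_nonneg _) (fun j => pwzv j) hv2
  have Sd : Summable fun j => (d j)^2 := by
    refine Summable.of_nonneg_of_le (fun j => sq_nonneg _) (fun j => pw4 j) (Sz.mul_left _)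
  have ST : Summable fun j => (T v j)^2 := (hT v hv2).1
  have STPQ : Summable fun j => (T vPQ j)^2 := (hT vPQ SPQ).1
  have STR : Summable fun j => (T vR j)^2 := (hT vR SR).1
  have Sg : Summable fun j => (g j)^2 := by
    rw [hgdef]; simp only [RkOp]; exact NLmask STR _
  have SaQ : Summable fun j => lam j ^ (2*α) * (vQ j)^2 := by
    refine Summable.of_nonneg_of_le (fun j => ?_) (fun j => ?_) hva
    · have := Real.rpow_nonneg (hpos j).le (2*α); positivity
    · apply mul_le_mul_of_nonneg_left _ (Real.rpow_nonneg (hpos j).le (2*α))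
      rw [hvQdef]; simp only [QkOp]
      by_cases hc : lam N + k < lam j
      · rw [if_pos hc]
      · rw [if_neg hc]; simpa using sq_nonneg (v j)
  -- scalar quantities
  have nsqnn : ∀ x : ℕ+ → ℝ, 0 ≤ nsq x := fun x => tsum_nonneg (fun j => sq_nonneg _)
  set a := Real.sqrt (nsq vP) with hadef
  set b := Real.sqrt (nsq vQ) with hbdef
  set s := Real.sqrt (nsq v) with hsdef
  set u := Real.sqrt (nsq vPQ) with hudef
  set r := Real.sqrt (nsq Rp + nsq Rq) with hrdef
  set m := Real.sqrt (asq lam α vQ) with hmdef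
  have ha2 : a^2 = nsq vP := Real.sq_sqrt (nsqnn _)
  have hb2 : b^2 = nsq vQ := Real.sq_sqrt (nsqnn _)
  have hs2 : s^2 = nsq v := Real.sq_sqrt (nsqnn _)
  have hu2 : u^2 = nsq vPQ := Real.sq_sqrt (nsqnn _)
  have hr2 : r^2 = nsq Rp + nsq Rq :=
    Real.sq_sqrt (add_nonneg (nsqnn _) (nsqnn _))
  have hasqnn : 0 ≤ asq lam α vQ := by
    apply tsum_nonneg
    intro j
    have := Real.rpow_nonneg (hpos j).le (2*α)
    positivity
  have hm2 : m^2 = asq lam α vQ := Real.sq_sqrt hasqnn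
  have ha0 : 0 ≤ a := Real.sqrt_nonneg _
  have hb0 : 0 ≤ b := Real.sqrt_nonneg _
  have hs0 : 0 ≤ s := Real.sqrt_nonneg _
  have hu0 : 0 ≤ u := Real.sqrt_nonneg _
  have hr0 : 0 ≤ r := Real.sqrt_nonneg _
  have hm0 : 0 ≤ m := Real.sqrt_nonneg _
  -- norm bounds
  have B1 : nsq (T v) ≤ (L*s)^2 := by
    calc nsq (T v) ≤ L^2 * nsq v := (hT v hv2).2
    _ = (L*s)^2 := by rw [← hs2]; ring
  have B2 : nsq WP ≤ (Λ*a)^2 := by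
    calc nsq WP = ∑' j, (WP j)^2 := rfl
    _ ≤ ∑' j, Λ^2 * (vP j)^2 := Summable.tsum_le_tsum pw1 SWP (SP.mul_left _)
    _ = Λ^2 * ∑' j, (vP j)^2 := tsum_mul_left
    _ = (Λ*a)^2 := by rw [show (∑' j, (vP j)^2) = nsq vP from rfl, ← ha2]; ring
  have B3 : nsq WQ ≤ m^2 := by
    calc nsq WQ = ∑' j, (WQ j)^2 := rfl
    _ ≤ ∑' j, lam j ^ (2*α) * (vQ j)^2 := Summable.tsum_le_tsum pw2 SWQ SaQ
    _ = asq lam α vQ := rfl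
    _ = m^2 := hm2.symm
  have B4 : nsq (T vPQ) ≤ (L*u)^2 := by
    calc nsq (T vPQ) ≤ L^2 * nsq vPQ := (hT vPQ SPQ).2
    _ = (L*u)^2 := by rw [← hu2]; ring
  have B5 : nsq WR ≤ (β*Λ*r)^2 := by
    calc nsq WR = ∑' j, (WR j)^2 := rfl
    _ ≤ ∑' j, (β*Λ)^2 * ((Rp j)^2 + (Rq j)^2) :=
        Summable.tsum_le_tsum pw3 SWR ((SRp.add SRq).mul_left _)
    _ = (β*Λ)^2 * ∑' j, ((Rp j)^2 + (Rq j)^2) := tsum_mul_left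
    _ = (β*Λ)^2 * (nsq Rp + nsq Rq) := by rw [Summable.tsum_add SRp SRq]; rfl
    _ = (β*Λ*r)^2 := by rw [← hr2]; ring
  have B6 : nsq g ≤ (δ*s)^2 := by
    have hS := hSAC v hv2
    rw [← hvRdef, ← hgdef] at hS
    calc nsq g ≤ δ^2 * nsq v := hS
    _ = (δ*s)^2 := by rw [← hs2]; ring
  have B7 : nsq z ≤ s^2 := by
    calc nsq z = ∑' j, (z j)^2 := rfl
    _ ≤ ∑' j, (v j)^2 := Summable.tsum_le_tsum pwzv Sz hv2
    _ = nsq v := rfl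
    _ = s^2 := hs2.symm
  have hnz : nsq z = r^2 := by
    calc nsq z = ∑' j, (z j)^2 := rfl
    _ = ∑' j, ((Rp j)^2 + (Rq j)^2) := tsum_congr pwz
    _ = nsq Rp + nsq Rq := by rw [Summable.tsum_add SRp SRq]; rfl
    _ = r^2 := hr2.symm
  have B8 : nsq d ≤ (Λ*r)^2 := by
    calc nsq d = ∑' j, (d j)^2 := rfl
    _ ≤ ∑' j, Λ^2 * (z j)^2 := Summable.tsum_le_tsum pw4 Sd (Sz.mul_left _)
    _ = Λ^2 * nsq z := tsum_mul_left
    _ = (Λ*r)^2 := by rw [hnz]; ring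
  -- norm relations
  have hu2r : u^2 = a^2 + b^2 := by
    rw [hu2, ha2, hb2]
    calc nsq vPQ = ∑' j, (vPQ j)^2 := rfl
    _ = ∑' j, ((vP j)^2 + (vQ j)^2) := tsum_congr pw8
    _ = nsq vP + nsq vQ := by rw [Summable.tsum_add SP SQ]; rfl
  have hs2r : s^2 = a^2 + r^2 + b^2 := by
    have hvr : nsq vR = r^2 := by
      calc nsq vR = ∑' j, (vR j)^2 := rfl
      _ = ∑' j, ((Rp j)^2 + (Rq j)^2) := tsum_congr pw7
      _ = nsq Rp + nsq Rq := by rw [Summable.tsum_add SRp SRq]; rfl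
      _ = r^2 := hr2.symm
    rw [hs2, ha2, hb2, ← hvr]
    calc nsq v = ∑' j, (v j)^2 := rfl
    _ = ∑' j, ((vP j)^2 + (vR j)^2 + (vQ j)^2) := tsum_congr pw6
    _ = nsq vP + nsq vR + nsq vQ := by
        rw [Summable.tsum_add ((SP.add SR)) SQ, Summable.tsum_add SP SR]; rfl
  -- summable products
  have SmP : Summable fun j => T v j * WP j := NLmul ST SWP
  have SmR : Summable fun j => T v j * WR j := NLmul ST SWR
  have SmQ : Summable fun j => T v j * WQ j := NLmul ST SWQ
  have SmPQR : Summable fun j => T vPQ j * WR j := NLmul STPQ SWR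
  have SmRR : Summable fun j => T vR j * WR j := NLmul STR SWR
  have Sgz : Summable fun j => g j * z j := NLmul Sg Sz
  have Sgd : Summable fun j => g j * d j := NLmul Sg Sd
  -- tsum splittings
  have e1 : ∀ j, T v j * W j = (T v j * WP j + T v j * WR j) + T v j * WQ j := by
    intro j; rw [pw9 j]; ring
  have split1 : (∑' j, T v j * W j) =
      ((∑' j, T v j * WP j) + (∑' j, T v j * WR j)) + (∑' j, T v j * WQ j) := by
    rw [tsum_congr e1, Summable.tsum_add (SmP.add SmR) SmQ, Summable.tsum_add SmP SmR]
  have hvfun : v = vPQ + vR := by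
    funext j
    rw [pw10 j]
    rfl
  have Tsplit : ∀ j, T v j = T vPQ j + T vR j := by
    intro j
    have hTv : T v = T vPQ + T vR := by rw [hvfun, map_add]
    rw [hTv]
    rfl
  have e2 : ∀ j, T v j * WR j = T vPQ j * WR j + T vR j * WR j := by
    intro j; rw [Tsplit j]; ring
  have split2 : (∑' j, T v j * WR j) =
      (∑' j, T vPQ j * WR j) + (∑' j, T vR j * WR j) := by
    rw [tsum_congr e2, Summable.tsum_add SmPQR SmRR]
  have e3 : ∀ j, T vR j * WR j = Λ * (g j * z j) + g j * d j := by
    intro j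
    rw [pw11 j, pw12 j]
    ring
  have split3 : (∑' j, T vR j * WR j) =
      Λ * (∑' j, g j * z j) + (∑' j, g j * d j) := by
    rw [tsum_congr e3, Summable.tsum_add (Sgz.mul_left Λ) Sgd, tsum_mul_left]
  -- Cauchy-Schwarz bounds
  have c1 : |∑' j, T v j * WP j| ≤ (L*s)*(Λ*a) :=
    NLCSb (mul_nonneg hL0.le hs0) (mul_nonneg hΛ0.le ha0) ST SWP B1 B2
  have c2 : |∑' j, T v j * WQ j| ≤ (L*s)*m :=
    NLCSb (mul_nonneg hL0.le hs0) hm0 ST SWQ B1 B3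
  have c3 : |∑' j, T vPQ j * WR j| ≤ (L*u)*(β*Λ*r) :=
    NLCSb (mul_nonneg hL0.le hu0) (mul_nonneg (mul_nonneg hβ0.le hΛ0.le) hr0)
      STPQ SWR B4 B5
  have c4 : |∑' j, g j * z j| ≤ (δ*s)*s :=
    NLCSb (mul_nonneg hδ.le hs0) hs0 Sg Sz B6 B7
  have c5 : |∑' j, g j * d j| ≤ (δ*s)*(Λ*r) :=
    NLCSb (mul_nonneg hδ.le hs0) (mul_nonneg hΛ0.le hr0) Sg Sd B6 B8
  have hR : |∑' j, T v j * WR j| ≤ (L*u)*(β*Λ*r) + (Λ*((δ*s)*s) + (δ*s)*(Λ*r)) := by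
    rw [split2, split3]
    have t1 := abs_add_le (∑' j, T vPQ j * WR j)
      (Λ * (∑' j, g j * z j) + (∑' j, g j * d j))
    have t2 := abs_add_le (Λ * (∑' j, g j * z j)) (∑' j, g j * d j)
    have h1 : |Λ * (∑' j, g j * z j)| = Λ * |∑' j, g j * z j| := by
      rw [abs_mul, abs_of_pos hΛ0]
    have h2 : Λ * |∑' j, g j * z j| ≤ Λ * ((δ*s)*s) :=
      mul_le_mul_of_nonneg_left c4 hΛ0.le
    linarith [c3, c5]
  have hbig : |∑' j, T v j * W j| ≤
      (L*s)*(Λ*a) + (L*s)*m + (L*u)*(β*Λ*r) + Λ*((δ*s)*s) + (δ*s)*(Λ*r) := by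
    rw [split1]
    have t1 := abs_add_le ((∑' j, T v j * WP j) + (∑' j, T v j * WR j))
      (∑' j, T v j * WQ j)
    have t2 := abs_add_le (∑' j, T v j * WP j) (∑' j, T v j * WR j)
    linarith [c1, c2, hR]
  have hgoalW : (∑' j, T v j * (lam j ^ α * p j - lam j ^ α * q j)) =
      ∑' j, T v j * W j := by
    refine tsum_congr fun j => ?_
    simp only [hWdef]
  have final := NLscalar L β δ Λ M a b r u s m hL hβ1 hΛ0 hMge hu2r hs2r
  rw [hgoalW]
  refine le_trans (le_trans hbig final) (le_of_eq ?_)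
  rw [hpow2, hs2, hm2, ha2, hb2, hr2]
  ring




end
end
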